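/- arXiv:2112.05441 — 8 statements merged into one kernel-verified Lean document; each statement's English description precedes it below -/
import Mathlib

section
/- Let d ≥ 1 be an integer and let f ∈ ℤ[X] be a nonzero polynomial of degree strictly less than φ(d). Then there exists an integer m_f such that for every d-admissible integer q > m_f and for every element w_q of order d in (ℤ/qℤ)×, one has Σ_{a ∈ ℤ/qℤ} e(a·f(w_q)/q) = 0, where f(w_q) denotes the class of f evaluated at an integer lift of w_q (the summand e(c/q) depends only on the class c modulo q). -/
open MeasureTheory Filter Polynomial Topology

noncomputable section

/-- The additive character value `e(c/q) = exp(2πi c/q)` for a residue class `c` modulo `q`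
(it only depends on the class of the integer lift `c.val` modulo `q`). -/
def eZMod (q : ℕ) (c : ZMod q) : ℂ :=
  Complex.exp (2 * Real.pi * Complex.I * (c.val : ℂ) / (q : ℂ))

/-- `q` is `d`-admissible if `q = p^α` for some odd prime `p ≡ 1 (mod d)` and some `α ≥ 1`. -/
def IsAdmissible (d q : ℕ) : Prop :=
  ∃ p α : ℕ, p.Prime ∧ Odd p ∧ p ≡ 1 [MOD d] ∧ 1 ≤ α ∧ q = p ^ α

/-- The coefficients `c_{j,k}` defined by `X^k ≡ ∑_j c_{j,k} X^j mod Φ_N`. -/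
def cCoeff (N k j : ℕ) : ℤ := (((X : ℤ[X]) ^ k) %ₘ cyclotomic N ℤ).coeff j

/-- The Laurent polynomial `g_d` on the torus `𝕋^{φ(d)}`. -/
def gPoly (d : ℕ) (z : Fin d.totient → Circle) : ℂ :=
  ∑ k ∈ Finset.range d, ∏ j : Fin d.totient, (z j : ℂ) ^ cCoeff d k (j : ℕ)

/-- `d_i := d / gcd(d, m_i)`. -/
def dSub (d : ℕ) (mi : ℤ) : ℕ := d / Int.gcd (d : ℤ) mi

/-- The Laurent polynomial `f_{d,m}` on the torus `𝕋^{φ(d_1) + ⋯ + φ(d_n)}`. -/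
def fPoly (d : ℕ) {n : ℕ} (m : Fin n → ℤ)
    (z : ∀ i : Fin n, Fin (dSub d (m i)).totient → Circle) : ℂ :=
  ∑ k ∈ Finset.range d, ∏ i : Fin n, ∏ j : Fin (dSub d (m i)).totient,
    (z i j : ℂ) ^ cCoeff (dSub d (m i)) k (j : ℕ)

/-- The exponential sum `∑_{x ∈ (ℤ/qℤ)ˣ, x^d = 1} e((a_1 x^{m_1} + ⋯ + a_n x^{m_n})/q)`. -/
def expSum (d q : ℕ) {n : ℕ} (m : Fin n → ℤ) (a : Fin n → ZMod q) : ℂ :=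
  ∑ᶠ x ∈ {x : (ZMod q)ˣ | x ^ d = 1},
    eZMod q (∑ i : Fin n, a i * ((x ^ m i : (ZMod q)ˣ) : ZMod q))

instance : MeasurableSpace Circle := borel Circle
instance : BorelSpace Circle := ⟨rfl⟩


section Helpers

lemma binomAux (l : ℕ) (m : ℤ) : m^2 ∣ (1+m)^l - 1 - l*m := by
  induction l with
  | zero => simp
  | succ n ih =>
    obtain ⟨c, hc⟩ := ih
    exact ⟨(1+m)*c + n, by push_cast; linear_combination (1+m)*hc⟩

lemma unitEqOne {p l : ℕ} (hp : p.Prime) (hl : l.Prime) (hne : l ≠ p) {α : ℕ} (hα : 1 ≤ α)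
    (x : ZMod (p^α)) (hx : x^l = 1)
    (hx1 : ZMod.castHom (dvd_pow_self p (by omega : α ≠ 0)) (ZMod p) x = 1) : x = 1 := by
  haveI : NeZero (p^α) := ⟨pow_ne_zero _ hp.pos.ne'⟩
  have hxv : ((x.val : ℕ) : ZMod (p^α)) = x := ZMod.natCast_rightInverse x
  have h1 : ((p:ℤ))^α ∣ (x.val:ℤ)^l - 1 := by
    have h0 : (((x.val:ℤ)^l - 1 : ℤ) : ZMod (p^α)) = 0 := by
      have : (((x.val:ℤ)^l - 1 : ℤ) : ZMod (p^α)) = x^l - 1 := by push_cast [hxv]; ring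
      rw [this, hx, sub_self]
    have := (ZMod.intCast_zmod_eq_zero_iff_dvd _ _).mp h0
    exact_mod_cast this
  have h2 : (p:ℤ) ∣ (x.val:ℤ) - 1 := by
    have hcast : ((x.val : ℕ) : ZMod p) = 1 := by
      have heq : (ZMod.castHom (dvd_pow_self p (by omega : α ≠ 0)) (ZMod p)) x
          = ((x.val : ℕ) : ZMod p) := by rw [← hxv]; simp
      rw [← heq, hx1]
    have h0 : (((x.val:ℤ) - 1 : ℤ) : ZMod p) = 0 := by
      have : (((x.val:ℤ) - 1 : ℤ) : ZMod p) = ((x.val : ℕ) : ZMod p) - 1 := by push_cast; ring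
      rw [this, hcast, sub_self]
    have := (ZMod.intCast_zmod_eq_zero_iff_dvd _ _).mp h0
    exact_mod_cast this
  have key : ∀ k, 1 ≤ k → k ≤ α → (p:ℤ)^k ∣ (x.val:ℤ) - 1 := by
    intro k
    induction k with
    | zero => omega
    | succ k ih =>
      intro _ hkα
      rcases Nat.eq_zero_or_pos k with rfl | hk
      · simpa using h2
      have hm : (p:ℤ)^k ∣ (x.val:ℤ) - 1 := ih hk (by omega)
      have hb : ((x.val:ℤ) - 1)^2 ∣ (1+((x.val:ℤ) - 1))^l - 1 - l*((x.val:ℤ) - 1) :=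
        binomAux l _
      have h2k : (p:ℤ)^(k+1) ∣ ((x.val:ℤ) - 1)^2 := by
        calc (p:ℤ)^(k+1) ∣ (p:ℤ)^(2*k) := pow_dvd_pow _ (by omega)
        _ = (p:ℤ)^k * (p:ℤ)^k := by ring
        _ ∣ ((x.val:ℤ) - 1) * ((x.val:ℤ) - 1) := mul_dvd_mul hm hm
        _ = ((x.val:ℤ) - 1)^2 := by ring
      have hnl : (p:ℤ)^(k+1) ∣ (x.val:ℤ)^l - 1 := dvd_trans (pow_dvd_pow _ hkα) h1
      have hlm : (p:ℤ)^(k+1) ∣ (l:ℤ) * ((x.val:ℤ) - 1) := by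
        have hd := dvd_sub hnl (dvd_trans h2k hb)
        have : (x.val:ℤ)^l - 1 - ((1+((x.val:ℤ) - 1))^l - 1 - l*((x.val:ℤ) - 1))
            = (l:ℤ) * ((x.val:ℤ) - 1) := by ring_nf
        rwa [this] at hd
      have hco : IsCoprime ((p:ℤ)^(k+1)) (l:ℤ) := by
        apply IsCoprime.pow_left
        rw [Nat.isCoprime_iff_coprime]
        exact (Nat.coprime_primes hp hl).mpr (Ne.symm hne)
      exact hco.dvd_of_dvd_mul_left hlm
  have hfin : ((((x.val:ℤ) - 1 : ℤ)) : ZMod (p^α)) = 0 := by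
    rw [ZMod.intCast_zmod_eq_zero_iff_dvd]
    exact_mod_cast key α hα le_rfl
  have : (((x.val:ℤ) - 1 : ℤ) : ZMod (p^α)) = x - 1 := by push_cast [hxv]; ring
  rw [this] at hfin
  linear_combination hfin

lemma isUnitOfCastNe {p α : ℕ} (hp : p.Prime) (hα : 1 ≤ α) (x : ZMod (p^α))
    (h : ZMod.castHom (dvd_pow_self p (by omega : α ≠ 0)) (ZMod p) x ≠ 0) : IsUnit x := by
  haveI : NeZero (p^α) := ⟨pow_ne_zero _ hp.pos.ne'⟩
  have hxv : ((x.val : ℕ) : ZMod (p^α)) = x := ZMod.natCast_rightInverse x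
  rw [← hxv]
  rw [ZMod.isUnit_iff_coprime]
  apply Nat.Coprime.pow_right
  rw [Nat.coprime_comm]
  rw [Nat.Prime.coprime_iff_not_dvd hp]
  intro hdvd
  apply h
  rw [← hxv]
  rw [map_natCast]
  exact (ZMod.natCast_eq_zero_iff _ p).mpr hdvd

lemma cycloEvalZero {p α d : ℕ} (hp : p.Prime) (hα : 1 ≤ α) (hd : 1 ≤ d) (hdvd : d ∣ p - 1)
    (w : (ZMod (p^α))ˣ) (hw : orderOf w = d) :
    ((cyclotomic d (ZMod (p^α))).eval (w : ZMod (p^α))) = 0 := by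
  haveI : NeZero (p^α) := ⟨pow_ne_zero _ hp.pos.ne'⟩
  set g := ZMod.castHom (dvd_pow_self p (by omega : α ≠ 0)) (ZMod p) with hg
  -- step 1 : for proper divisors e, (w^e - 1) is a unit
  have hunit : ∀ e, e ∣ d → e < d → IsUnit ((w : ZMod (p^α))^e - 1) := by
    intro e hed hlt
    apply isUnitOfCastNe hp hα
    intro hzero
    have hge : (g (w : ZMod (p^α)))^e = 1 := by
      have : g ((w : ZMod (p^α))^e - 1) = (g (w : ZMod (p^α)))^e - 1 := by
        rw [map_sub, map_pow, map_one]
      rw [this] at hzero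
      linear_combination hzero
    obtain ⟨D, hD⟩ := hed   -- d = e * D
    have hD0 : D ≠ 0 := by rintro rfl; omega
    have he0 : 0 < e := Nat.pos_of_ne_zero (by rintro rfl; omega)
    have hDe : orderOf (w^e) = D := by
      rw [orderOf_pow, hw, hD, Nat.gcd_comm, Nat.gcd_eq_left (dvd_mul_right e D),
        Nat.mul_div_cancel_left D he0]
    have hD1 : 1 < D := by
      rcases Nat.lt_or_ge D 2 with h | h
      · interval_cases D <;> omega
      · exact h
    set l := D.minFac with hl
    have hlp : l.Prime := Nat.minFac_prime (by omega)
    have hlD : l ∣ D := Nat.minFac_dvd D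
    set u := (w^e)^(D / l) with hu
    have hou : orderOf u = l := by
      rw [hu, orderOf_pow, hDe, Nat.gcd_eq_right (Nat.div_dvd_of_dvd hlD),
        Nat.div_div_self hlD (by omega)]
    have hlnep : l ≠ p := by
      have h1 : l ∣ p - 1 := dvd_trans hlD (dvd_trans ⟨e, by rw [hD]; ring⟩ hdvd)
      have hp1 : 0 < p - 1 := by have := hp.two_le; omega
      have := Nat.le_of_dvd hp1 h1
      have := hp.two_le
      omega
    have hul : ((u : ZMod (p^α)))^l = 1 := by
      rw [← Units.val_pow_eq_pow_val, ← hou, pow_orderOf_eq_one, Units.val_one]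
    have hu1 : g ((u : ZMod (p^α))) = 1 := by
      rw [hu]
      push_cast
      rw [map_pow, map_pow, hge, one_pow]
    have := unitEqOne hp hlp hlnep hα _ hul hu1
    have : u = 1 := Units.ext this
    rw [this, orderOf_one] at hou
    exact absurd hou.symm hlp.one_lt.ne'
  -- step 2 : each proper-divisor cyclotomic evaluates to a unit
  have hcunit : ∀ e ∈ d.properDivisors, IsUnit ((cyclotomic e (ZMod (p^α))).eval (w : ZMod (p^α))) := by
    intro e he
    rw [Nat.mem_properDivisors] at he
    have he0 : 0 < e := Nat.pos_of_dvd_of_pos he.1 (by omega)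
    have hdvd2 : (cyclotomic e (ZMod (p^α))).eval (w : ZMod (p^α)) ∣ (w : ZMod (p^α))^e - 1 := by
      have := prod_cyclotomic_eq_X_pow_sub_one he0 (ZMod (p^α))
      have h2 : ∏ i ∈ e.divisors, (cyclotomic i (ZMod (p^α))).eval (w : ZMod (p^α))
          = (w : ZMod (p^α))^e - 1 := by
        rw [← eval_prod, this]; simp
      exact h2 ▸ Finset.dvd_prod_of_mem _ (Nat.mem_divisors_self e (by omega))
    exact isUnit_of_dvd_unit hdvd2 (hunit e he.1 he.2)
  -- step 3 : conclude
  have hprod : ∏ i ∈ d.divisors, (cyclotomic i (ZMod (p^α))).eval (w : ZMod (p^α)) = 0 := by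
    rw [← eval_prod, prod_cyclotomic_eq_X_pow_sub_one (by omega) (ZMod (p^α))]
    have : (w : ZMod (p^α))^d = 1 := by
      rw [← Units.val_pow_eq_pow_val, ← hw, pow_orderOf_eq_one, Units.val_one]
    simp [this]
  rw [← Nat.insert_self_properDivisors (by omega : d ≠ 0),
    Finset.prod_insert Nat.self_notMem_properDivisors] at hprod
  have hU : IsUnit (∏ i ∈ d.properDivisors, (cyclotomic i (ZMod (p^α))).eval (w : ZMod (p^α))) := by
    apply Finset.prod_induction _ IsUnit (fun a b ha hb => ha.mul hb) isUnit_one hcunit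
  rw [mul_comm] at hprod
  exact (hU.mul_right_eq_zero).mp hprod

lemma bezoutCyclo (d : ℕ) (hd : 1 ≤ d) (f : ℤ[X]) (hf : f ≠ 0) (hdeg : f.natDegree < d.totient) :
    ∃ R : ℤ, R ≠ 0 ∧ ∃ u v : ℤ[X], u * f + v * cyclotomic d ℤ = C R := by
  have hinj : Function.Injective (Int.castRingHom ℚ) := Int.cast_injective
  set fQ := f.map (Int.castRingHom ℚ) with hfQdef
  have hfQ : fQ ≠ 0 := (Polynomial.map_ne_zero_iff hinj).mpr hf
  have hirr := Polynomial.cyclotomic.irreducible_rat (show 0 < d by omega)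
  have hnd : ¬ (cyclotomic d ℚ ∣ fQ) := by
    intro h
    have h1 := Polynomial.natDegree_le_of_dvd h hfQ
    rw [natDegree_cyclotomic] at h1
    rw [hfQdef, natDegree_map_eq_of_injective hinj] at h1
    omega
  have hco : IsCoprime (cyclotomic d ℚ) fQ := (hirr.coprime_iff_not_dvd).mpr hnd
  obtain ⟨a, b, hab⟩ := hco
  obtain ⟨na, hna⟩ := IsLocalization.integerNormalization_map_to_map (nonZeroDivisors ℤ) a
  obtain ⟨nb, hnb⟩ := IsLocalization.integerNormalization_map_to_map (nonZeroDivisors ℤ) b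
  set A := IsLocalization.integerNormalization (nonZeroDivisors ℤ) a with hA
  set B := IsLocalization.integerNormalization (nonZeroDivisors ℤ) b with hB
  have hna0 : (na : ℤ) ≠ 0 := nonZeroDivisors.coe_ne_zero na
  have hnb0 : (nb : ℤ) ≠ 0 := nonZeroDivisors.coe_ne_zero nb
  refine ⟨(na : ℤ) * nb, mul_ne_zero hna0 hnb0, C (na : ℤ) * B, C (nb : ℤ) * A, ?_⟩
  apply Polynomial.map_injective (Int.castRingHom ℚ) hinj
  have halg : algebraMap ℤ ℚ = Int.castRingHom ℚ := rfl
  have hsa : ((na : ℤ) • a) = C ((na : ℤ) : ℚ) * a := by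
    rw [← Int.cast_smul_eq_zsmul ℚ, Polynomial.smul_eq_C_mul]
  have hsb : ((nb : ℤ) • b) = C ((nb : ℤ) : ℚ) * b := by
    rw [← Int.cast_smul_eq_zsmul ℚ, Polynomial.smul_eq_C_mul]
  rw [Polynomial.map_add, Polynomial.map_mul, Polynomial.map_mul, Polynomial.map_mul,
    Polynomial.map_mul, Polynomial.map_C, Polynomial.map_C, Polynomial.map_C, ← halg, hna, hnb,
    hsa, hsb,
    show (cyclotomic d ℤ).map (algebraMap ℤ ℚ) = cyclotomic d ℚ from map_cyclotomic_int d ℚ,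
    show (algebraMap ℤ ℚ) ((na : ℤ) * nb) = ((na:ℤ):ℚ) * ((nb:ℤ):ℚ) by rw [eq_intCast, Int.cast_mul], C_mul]
  rw [halg, ← hfQdef]
  simp only [eq_intCast]
  linear_combination (C ((na:ℤ):ℚ) * C ((nb:ℤ):ℚ)) * hab

lemma eZMod_add (q : ℕ) [NeZero q] (x y : ZMod q) :
    eZMod q (x + y) = eZMod q x * eZMod q y := by
  have hq : (q:ℂ) ≠ 0 := Nat.cast_ne_zero.mpr (NeZero.ne q)
  set t := (x.val + y.val) / q with ht
  have key : (x.val + y.val : ℕ) = (x+y).val + q * t := by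
    rw [ZMod.val_add, ht]
    exact (Nat.mod_add_div _ _).symm
  have harg : 2 * Real.pi * Complex.I * ((x.val:ℂ)) / q + 2 * Real.pi * Complex.I * (y.val:ℂ) / q
      = 2 * Real.pi * Complex.I * (((x+y).val:ℂ)) / q + (t:ℤ) * (2 * Real.pi * Complex.I) := by
    have hc : ((x.val + y.val : ℕ) : ℂ) = (((x+y).val + q * t : ℕ) : ℂ) := by rw [key]
    push_cast at hc
    field_simp
    simp only [ZMod.natCast_val] at hc ⊢
    linear_combination hc
  rw [eZMod, eZMod, eZMod, ← Complex.exp_add, harg, Complex.exp_add,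
    Complex.exp_int_mul_two_pi_mul_I, mul_one]

lemma eZMod_ne_one (q : ℕ) [NeZero q] (c : ZMod q) (hc : c ≠ 0) : eZMod q c ≠ 1 := by
  intro h
  have hq : (q:ℂ) ≠ 0 := Nat.cast_ne_zero.mpr (NeZero.ne q)
  rw [eZMod, Complex.exp_eq_one_iff] at h
  obtain ⟨n, hn⟩ := h
  have hpi : (2 * (Real.pi:ℂ) * Complex.I) ≠ 0 := by
    simp [Real.pi_ne_zero, Complex.I_ne_zero]
  have hval : (c.val : ℂ) = (n:ℂ) * q := by
    have h2 := congrArg (fun z => z * (q:ℂ)) hn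
    rw [div_mul_cancel₀ _ hq] at h2
    apply mul_left_cancel₀ hpi
    linear_combination h2
  have hvalZ : (c.val : ℤ) = n * q := by exact_mod_cast hval
  have hdvd : q ∣ c.val := by
    have : (q:ℤ) ∣ (c.val : ℤ) := ⟨n, by rw [hvalZ]; ring⟩
    exact_mod_cast this
  have h1 : c.val < q := ZMod.val_lt c
  have h2 : c.val ≠ 0 := fun h0 => hc ((ZMod.val_eq_zero c).mp h0)
  have := Nat.le_of_dvd (Nat.pos_of_ne_zero h2) hdvd
  omega

lemma sum_eZMod_eq_zero (q : ℕ) [NeZero q] (c : ZMod q) (hc : c ≠ 0) :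
    ∑ a : ZMod q, eZMod q (a * c) = 0 := by
  set S := ∑ a : ZMod q, eZMod q (a * c) with hS
  have h1 : S * eZMod q c = S := by
    rw [hS, Finset.sum_mul]
    calc ∑ a : ZMod q, eZMod q (a * c) * eZMod q c
        = ∑ a : ZMod q, eZMod q ((a + 1) * c) := by
          refine Finset.sum_congr rfl fun a _ => ?_
          rw [add_mul, one_mul, eZMod_add]
      _ = ∑ a : ZMod q, eZMod q (a * c) :=
          Fintype.sum_equiv (Equiv.addRight 1) _ _ (fun a => rfl)
  have h2 : S * (eZMod q c - 1) = 0 := by linear_combination h1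
  rcases mul_eq_zero.mp h2 with h | h
  · exact h
  · exact absurd (by linear_combination h) (eZMod_ne_one q c hc)

end Helpers

theorem stmt7 (d : ℕ) (hd : 1 ≤ d) (f : ℤ[X]) (hf : f ≠ 0)
    (hdeg : f.natDegree < d.totient) :
    ∃ mf : ℕ, ∀ q : ℕ, mf < q → IsAdmissible d q →
      ∀ w : (ZMod q)ˣ, orderOf w = d →
      ∑ᶠ a : ZMod q, eZMod q (a * Polynomial.aeval ((w : ZMod q)) f) = 0 := by
  obtain ⟨R, hR, u, v, hbez⟩ := bezoutCyclo d hd f hf hdeg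
  refine ⟨R.natAbs, ?_⟩
  rintro q hq ⟨p, α, hp, hodd, hmod, hα, rfl⟩ w hw
  haveI : Fact p.Prime := ⟨hp⟩
  haveI : NeZero (p^α) := ⟨pow_ne_zero _ hp.pos.ne'⟩
  have hdvd : d ∣ p - 1 := (Nat.modEq_iff_dvd' hp.one_le).mp hmod.symm
  rw [finsum_eq_sum_of_fintype]
  apply sum_eZMod_eq_zero
  intro hc0
  have hcy : Polynomial.aeval ((w : ZMod (p^α))) (cyclotomic d ℤ) = 0 := by
    have h0 := cycloEvalZero hp hα hd hdvd w hw
    rw [aeval_def, eval₂_eq_eval_map,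
      show (cyclotomic d ℤ).map (algebraMap ℤ (ZMod (p^α))) = cyclotomic d (ZMod (p^α)) from
        map_cyclotomic_int d (ZMod (p^α))]
    exact h0
  have hzero := congrArg (Polynomial.aeval ((w : ZMod (p^α)))) hbez
  rw [map_add, map_mul, map_mul, hc0, hcy, mul_zero, mul_zero, add_zero, aeval_C] at hzero
  have hz2 : ((R : ℤ) : ZMod (p^α)) = 0 := by simpa using hzero.symm
  have hdvd2 : (((p^α : ℕ)) : ℤ) ∣ R := (ZMod.intCast_zmod_eq_zero_iff_dvd R _).mp hz2
  have hdvd3 : (p^α) ∣ R.natAbs := by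
    have h := Int.natAbs_dvd_natAbs.mpr hdvd2
    rwa [Int.natAbs_natCast] at h
  have := Nat.le_of_dvd (Int.natAbs_pos.mpr hR) hdvd3
  omega
end
end

section
/- Let d ≥ 1 and let f ∈ ℤ[X] be a nonzero polynomial of degree strictly less than φ(d). For every d-admissible integer q, let w_q be an element of order d in (ℤ/qℤ)× and let w̃_q ∈ ℤ be an arbitrary lift of w_q. Then there exists an integer n_f ≥ 1 such that for every d-admissible integer q with q > n_f, q does not divide f(w̃_q); equivalently, f(w̃_q) ≢ 0 (mod q). -/
open MeasureTheory Filter Polynomial Topology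

noncomputable section

namespace Stmt8Aux

lemma bezout (d : ℕ) (hd : 1 ≤ d) (f : ℤ[X]) (hf : f ≠ 0) (hdeg : f.natDegree < d.totient) :
    ∃ (U V : ℤ[X]) (R : ℤ), R ≠ 0 ∧ V * f + U * cyclotomic d ℤ = C R := by
  have hinj : Function.Injective (Int.castRingHom ℚ) := Int.cast_injective
  set fQ : ℚ[X] := f.map (Int.castRingHom ℚ) with hfQdef
  have hfQ : fQ ≠ 0 := (Polynomial.map_ne_zero_iff hinj).mpr hf
  have hirr : Irreducible (cyclotomic d ℚ) := cyclotomic.irreducible_rat hd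
  have hndvd : ¬ cyclotomic d ℚ ∣ fQ := by
    intro h
    have h1 : (cyclotomic d ℚ).natDegree ≤ fQ.natDegree :=
      Polynomial.natDegree_le_of_dvd h hfQ
    rw [natDegree_cyclotomic, Polynomial.natDegree_map_eq_of_injective hinj] at h1
    omega
  obtain ⟨u, v, huv⟩ := (hirr.coprime_iff_not_dvd.mpr hndvd)
  obtain ⟨bu, hbu⟩ := IsLocalization.integerNormalization_map_to_map (nonZeroDivisors ℤ) u
  obtain ⟨bv, hbv⟩ := IsLocalization.integerNormalization_map_to_map (nonZeroDivisors ℤ) v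
  set U' := IsLocalization.integerNormalization (nonZeroDivisors ℤ) u with hU'
  set V' := IsLocalization.integerNormalization (nonZeroDivisors ℤ) v with hV'
  refine ⟨C (bv : ℤ) * U', C (bu : ℤ) * V', (bu : ℤ) * (bv : ℤ),
    mul_ne_zero (nonZeroDivisors.ne_zero bu.2) (nonZeroDivisors.ne_zero bv.2), ?_⟩
  apply Polynomial.map_injective (Int.castRingHom ℚ) hinj
  have halg : algebraMap ℤ ℚ = Int.castRingHom ℚ := rfl
  rw [halg] at hbu hbv
  have hsmul : ∀ (b : ℤ) (p : ℚ[X]), b • p = C (b : ℚ) * p := by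
    intro b p
    rw [zsmul_eq_mul]
    norm_cast
  rw [hsmul] at hbu hbv
  push_cast [Polynomial.map_mul, Polynomial.map_add, Polynomial.map_C, hbu, hbv,
    map_cyclotomic_int]
  simp only [Int.coe_castRingHom, eq_intCast, Int.cast_mul, Polynomial.C_mul]
  ring_nf
  ring_nf at huv
  linear_combination (C ((bu:ℤ):ℚ) * C ((bv:ℤ):ℚ)) * huv

lemma isUnit_of_castHom_ne_zero (p α : ℕ) (hp : p.Prime) (hα : 1 ≤ α) (x : ZMod (p^α))
    (h : ZMod.castHom (dvd_pow_self p (by omega : α ≠ 0)) (ZMod p) x ≠ 0) : IsUnit x := by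
  have hne : NeZero (p ^ α) := ⟨pow_ne_zero _ hp.pos.ne'⟩
  have hx : ((x.val : ℕ) : ZMod (p^α)) = x := by
    rw [ZMod.natCast_val, ZMod.cast_id]
  rw [← hx, ZMod.isUnit_iff_coprime]
  apply Nat.Coprime.pow_right
  rw [Nat.coprime_comm]
  rw [hp.coprime_iff_not_dvd]
  intro hdvd
  apply h
  rw [ZMod.castHom_apply, ← ZMod.natCast_val,
    ZMod.natCast_eq_zero_iff]
  exact hdvd


lemma order_red (p α d : ℕ) (hp : p.Prime) (hα : 1 ≤ α) (hdp : d ∣ p - 1)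
    (u : (ZMod (p^α))ˣ) (hu : orderOf u = d) :
    orderOf (ZMod.unitsMap (dvd_pow_self p (by omega : α ≠ 0)) u) = d := by
  have hne : NeZero (p ^ α) := ⟨pow_ne_zero _ hp.pos.ne'⟩
  have hnep : NeZero p := ⟨hp.pos.ne'⟩
  set φ := ZMod.unitsMap (dvd_pow_self p (by omega : α ≠ 0)) with hφ
  have h1 : orderOf (φ u) ∣ d := hu ▸ orderOf_map_dvd φ u
  have hcard : Nat.card φ.ker = p ^ (α - 1) := by
    have e : ((ZMod (p^α))ˣ ⧸ φ.ker) ≃* (ZMod p)ˣ :=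
      QuotientGroup.quotientKerEquivOfSurjective φ
        (ZMod.unitsMap_surjective (dvd_pow_self p (by omega : α ≠ 0)))
    have h2 := Subgroup.card_eq_card_quotient_mul_card_subgroup φ.ker
    rw [Nat.card_congr e.toEquiv, Nat.card_eq_fintype_card, Nat.card_eq_fintype_card,
      ZMod.card_units_eq_totient, ZMod.card_units_eq_totient,
      Nat.totient_prime_pow hp (by omega), Nat.totient_prime hp] at h2
    have hp1 : 0 < p - 1 := by have := hp.two_le; omega
    exact Nat.eq_of_mul_eq_mul_left hp1 (by linarith [h2])
  set e := orderOf (φ u) with he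
  have hx : u ^ e ∈ φ.ker := by
    rw [MonoidHom.mem_ker, map_pow, pow_orderOf_eq_one]
  have h2 : orderOf (u ^ e) ∣ p ^ (α - 1) := hcard ▸ Subgroup.orderOf_dvd_natCard φ.ker hx
  have h3 : orderOf (u ^ e) ∣ d := by
    apply orderOf_dvd_of_pow_eq_one
    rw [← pow_mul, mul_comm, pow_mul, ← hu, pow_orderOf_eq_one, one_pow]
  have hcop : Nat.Coprime (p ^ (α - 1)) d := by
    apply Nat.Coprime.coprime_dvd_right hdp
    apply Nat.Coprime.pow_left
    have hpe : p - 1 + 1 = p := by have := hp.two_le; omega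
    show Nat.gcd p (p-1) = 1
    rw [← hpe, Nat.add_sub_cancel, Nat.gcd_self_add_left, Nat.gcd_one_left]
  have h4 : orderOf (u ^ e) ∣ 1 := hcop ▸ Nat.dvd_gcd h2 h3
  have h5 : u ^ e = 1 := orderOf_eq_one_iff.mp (Nat.dvd_one.mp h4)
  exact Nat.dvd_antisymm h1 (hu ▸ orderOf_dvd_of_pow_eq_one h5)

lemma cyclo_root (p α d : ℕ) (hp : p.Prime) (hα : 1 ≤ α) (hd : 1 ≤ d) (hdp : d ∣ p - 1)
    (u : (ZMod (p^α))ˣ) (hu : orderOf u = d) :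
    (cyclotomic d (ZMod (p^α))).eval (u : ZMod (p^α)) = 0 := by
  have hne : NeZero (p ^ α) := ⟨pow_ne_zero _ hp.pos.ne'⟩
  have hnep : NeZero p := ⟨hp.pos.ne'⟩
  haveI : Fact p.Prime := ⟨hp⟩
  have hp1 : 0 < p - 1 := by have := hp.two_le; have := Nat.le_of_dvd ?_ hdp <;> omega
  set ψ := ZMod.castHom (dvd_pow_self p (by omega : α ≠ 0)) (ZMod p) with hψ
  set u' := ZMod.unitsMap (dvd_pow_self p (by omega : α ≠ 0)) u with hu'def
  have hu' : orderOf u' = d := order_red p α d hp hα hdp u hu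
  have hprim : IsPrimitiveRoot ((u' : ZMod p)) d := by
    have h0 := IsPrimitiveRoot.orderOf ((u' : ZMod p))
    rwa [orderOf_units, hu'] at h0
  set x : ZMod (p^α) := (u : ZMod (p^α)) with hx
  have hprod : ((∏ e ∈ d.divisors, cyclotomic e (ZMod (p^α)))).eval x = 0 := by
    rw [prod_cyclotomic_eq_X_pow_sub_one (by omega) (ZMod (p^α))]
    rw [eval_sub, eval_pow, eval_X, eval_one]
    have : (u : ZMod (p^α)) ^ d = 1 := by
      rw [← Units.val_pow_eq_pow_val, ← hu, pow_orderOf_eq_one, Units.val_one]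
    rw [hx, this, sub_self]
  rw [eval_prod] at hprod
  rw [← Finset.mul_prod_erase d.divisors _ (Nat.mem_divisors_self d (by omega))] at hprod
  have hunit : IsUnit (∏ e ∈ d.divisors.erase d, (cyclotomic e (ZMod (p^α))).eval x) := by
    refine Finset.prod_induction _ IsUnit (fun a b ha hb => ha.mul hb) isUnit_one ?_
    intro e he
    have hee := Finset.mem_erase.mp he
    have hed : e ∣ d := (Nat.mem_divisors.mp hee.2).1
    have he1 : 1 ≤ e := Nat.pos_of_dvd_of_pos hed (by omega)
    apply isUnit_of_castHom_ne_zero p α hp hα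
    have hcomm : ψ ((cyclotomic e (ZMod (p^α))).eval x) =
        (cyclotomic e (ZMod p)).eval (u' : ZMod p) := by
      have h1 : ψ ((cyclotomic e (ZMod (p^α))).eval x) =
          ((cyclotomic e (ZMod (p^α))).map ψ).eval (ψ x) := by
        rw [eval_map, eval₂_hom]
      rw [h1, map_cyclotomic]
      congr 1
    rw [hcomm]
    intro hzero
    have hep : e ≤ p - 1 := Nat.le_of_dvd hp1 (hed.trans hdp)
    have : NeZero ((e : ZMod p)) := by
      constructor
      rw [Ne, ZMod.natCast_eq_zero_iff]
      intro hpe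
      have := Nat.le_of_dvd (by omega) hpe
      omega
    have hroot : IsPrimitiveRoot ((u' : ZMod p)) e := by
      rw [← isRoot_cyclotomic_iff]
      exact hzero
    exact hee.1 (hroot.eq_orderOf.trans hprim.eq_orderOf.symm)
  rwa [IsUnit.mul_left_eq_zero hunit] at hprod

end Stmt8Aux

theorem stmt8 (d : ℕ) (hd : 1 ≤ d) (f : ℤ[X]) (hf : f ≠ 0)
    (hdeg : f.natDegree < d.totient)
    (w : ∀ q : ℕ, (ZMod q)ˣ) (hw : ∀ q, IsAdmissible d q → orderOf (w q) = d) :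
    ∃ nf : ℕ, 1 ≤ nf ∧ ∀ q : ℕ, nf < q → IsAdmissible d q →
      ∀ wt : ℤ, ((wt : ZMod q) = ((w q : (ZMod q)ˣ) : ZMod q)) →
        ¬ ((q : ℤ) ∣ f.eval wt) := by
  obtain ⟨U, V, R, hR, hUV⟩ := Stmt8Aux.bezout d hd f hf hdeg
  have hRpos : 1 ≤ R.natAbs := by
    rcases Int.natAbs_eq_zero.not.mpr hR with h
    omega
  refine ⟨R.natAbs, hRpos, ?_⟩
  intro q hq hadm wt hwt hdvd
  obtain ⟨p, α, hp, hodd, hmod, hα, rfl⟩ := hadm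
  have hp2 := hp.two_le
  have hdp : d ∣ p - 1 := (Nat.modEq_iff_dvd' (by omega)).mp hmod.symm
  have hcy : (cyclotomic d (ZMod (p ^ α))).eval ((w (p ^ α) : ZMod (p ^ α))) = 0 :=
    Stmt8Aux.cyclo_root p α d hp hα hd hdp (w (p ^ α))
      (hw _ ⟨p, α, hp, hodd, hmod, hα, rfl⟩)
  have hcyZ : ((p ^ α : ℕ) : ℤ) ∣ (cyclotomic d ℤ).eval wt := by
    rw [← ZMod.intCast_zmod_eq_zero_iff_dvd]
    have h1 : (((cyclotomic d ℤ).eval wt : ℤ) : ZMod (p ^ α)) =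
        ((cyclotomic d ℤ).map (Int.castRingHom (ZMod (p ^ α)))).eval ((wt : ZMod (p ^ α))) := by
      rw [eval_map]
      exact (eval₂_hom (Int.castRingHom (ZMod (p ^ α))) wt (p := cyclotomic d ℤ)).symm
    rw [h1, map_cyclotomic_int, hwt]
    exact_mod_cast hcy
  have heval := congrArg (Polynomial.eval wt) hUV
  rw [eval_add, eval_mul, eval_mul, eval_C] at heval
  have hqR : ((p ^ α : ℕ) : ℤ) ∣ R := by
    rw [← heval]
    exact dvd_add (hdvd.mul_left _) (hcyZ.mul_left _)
  have hle : p ^ α ≤ R.natAbs := by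
    have h2 : p ^ α ∣ R.natAbs := by
      rw [← Int.natAbs_natCast (p ^ α)]
      exact Int.natAbs_dvd_natAbs.mpr hqR
    exact Nat.le_of_dvd (by omega) h2
  omega
end
end

section
/- Let d ≥ 1 and let f ∈ ℤ[X] be a nonzero polynomial of degree strictly less than φ(d). For every d-admissible integer q, let w_q be an element of order d in (ℤ/qℤ)× and let w̃_q ∈ ℤ be an arbitrary lift of w_q. Then there exist constants C_f ≥ 1 and n_f ≥ 1 such that for every d-admissible integer q = p^α with q > n_f, one has p^{v_p(f(w̃_q))} ≤ C_f, where v_p denotes the p-adic valuation. -/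
open MeasureTheory Filter Polynomial Topology

noncomputable section

/-- Integer Bézout identity between `f` and the `d`-th cyclotomic polynomial. -/
lemma exists_int_bezout (d : ℕ) (hd : 0 < d) (f : ℤ[X]) (hf : f ≠ 0)
    (hdeg : f.natDegree < d.totient) :
    ∃ (u v : ℤ[X]) (N : ℤ), N ≠ 0 ∧ u * f + v * cyclotomic d ℤ = C N := by
  set ι : ℤ →+* ℚ := Int.castRingHom ℚ
  have hinj : Function.Injective ι := Int.cast_injective
  have hfq : f.map ι ≠ 0 := by
    simpa [Polynomial.map_eq_zero_iff hinj] using hf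
  have hirr : Irreducible (cyclotomic d ℚ) := cyclotomic.irreducible_rat hd
  have hndvd : ¬ cyclotomic d ℚ ∣ f.map ι := by
    intro h
    have := Polynomial.natDegree_le_of_dvd h hfq
    rw [natDegree_cyclotomic] at this
    have : (f.map ι).natDegree = f.natDegree := natDegree_map_eq_of_injective hinj f
    omega
  have hco : IsCoprime (f.map ι) (cyclotomic d ℚ) :=
    ((hirr.coprime_iff_not_dvd).mpr hndvd).symm
  obtain ⟨a, b, hab⟩ := hco
  obtain ⟨na, hA⟩ := IsLocalization.integerNormalization_map_to_map (nonZeroDivisors ℤ) a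
  obtain ⟨nb, hB⟩ := IsLocalization.integerNormalization_map_to_map (nonZeroDivisors ℤ) b
  set A := IsLocalization.integerNormalization (nonZeroDivisors ℤ) a
  set B := IsLocalization.integerNormalization (nonZeroDivisors ℤ) b
  have hna : (na : ℤ) ≠ 0 := nonZeroDivisors.coe_ne_zero na
  have hnb : (nb : ℤ) ≠ 0 := nonZeroDivisors.coe_ne_zero nb
  refine ⟨C (nb : ℤ) * A, C (na : ℤ) * B, (na : ℤ) * (nb : ℤ), mul_ne_zero hna hnb, ?_⟩
  apply Polynomial.map_injective ι hinj
  have hA' : A.map ι = C ((na : ℤ) : ℚ) * a := by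
    rw [show ι = algebraMap ℤ ℚ from rfl, hA, ← algebraMap_smul ℚ ((na : ℤ)) a,
      smul_eq_C_mul]; rfl
  have hB' : B.map ι = C ((nb : ℤ) : ℚ) * b := by
    rw [show ι = algebraMap ℤ ℚ from rfl, hB, ← algebraMap_smul ℚ ((nb : ℤ)) b,
      smul_eq_C_mul]; rfl
  rw [Polynomial.map_add, Polynomial.map_mul, Polynomial.map_mul, Polynomial.map_mul,
    Polynomial.map_mul, map_C, map_C, map_C, hA', hB', map_cyclotomic]
  simp only [eq_intCast, Int.cast_mul, C_mul]
  linear_combination (C ((na : ℤ) : ℚ) * C ((nb : ℤ) : ℚ)) * hab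

/-- If `wt` has "order exactly `d`" modulo `p^α`, then `p^α` divides `Φ_d(wt)`. -/
lemma pow_dvd_cyclotomic_eval (d p α : ℕ) (hd : 0 < d) (pp : p.Prime) (hpd : ¬ p ∣ d)
    (hα : 1 ≤ α) (wt : ℤ) (h1 : (p:ℤ)^α ∣ wt^d - 1)
    (hord : ∀ e, e ∣ d → 0 < e → (p:ℤ)^α ∣ wt^e - 1 → e = d) :
    (p:ℤ)^α ∣ (cyclotomic d ℤ).eval wt := by
  haveI : Fact p.Prime := ⟨pp⟩
  have hpz : Prime (p:ℤ) := Nat.prime_iff_prime_int.mp pp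
  have hprod : ∏ e ∈ d.divisors, (cyclotomic e ℤ).eval wt = wt^d - 1 := by
    have := prod_cyclotomic_eq_X_pow_sub_one hd ℤ
    calc ∏ e ∈ d.divisors, (cyclotomic e ℤ).eval wt
        = (∏ e ∈ d.divisors, cyclotomic e ℤ).eval wt := (eval_prod _ _ wt).symm
      _ = wt^d - 1 := by rw [this]; simp
  have key : ∀ e ∈ d.divisors, (p:ℤ) ∣ (cyclotomic e ℤ).eval wt →
      IsPrimitiveRoot ((wt : ZMod p)) e := by
    intro e he hdvd
    have hepos : 0 < e := Nat.pos_of_mem_divisors he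
    have hped : ¬ p ∣ e := fun h => hpd (h.trans (Nat.dvd_of_mem_divisors he))
    haveI : NeZero ((e : ZMod p)) :=
      ⟨by rwa [Ne, ZMod.natCast_eq_zero_iff]⟩
    have h0 : (cyclotomic e (ZMod p)).eval ((wt : ZMod p)) = 0 := by
      have : (cyclotomic e (ZMod p)) = (cyclotomic e ℤ).map (Int.castRingHom (ZMod p)) :=
        (map_cyclotomic e (Int.castRingHom (ZMod p))).symm
      rw [this, eval_intCast_map]
      exact_mod_cast (ZMod.intCast_zmod_eq_zero_iff_dvd _ p).mpr (by exact_mod_cast hdvd)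
    exact isRoot_cyclotomic_iff.mp h0
  have hpdvd : (p:ℤ) ∣ ∏ e ∈ d.divisors, (cyclotomic e ℤ).eval wt := by
    rw [hprod]; exact (dvd_pow_self _ (by omega)).trans h1
  obtain ⟨e₀, he₀, he₀d⟩ := hpz.exists_mem_finset_dvd hpdvd
  have huniq : ∀ e ∈ d.divisors.erase e₀, ¬ (p:ℤ) ∣ (cyclotomic e ℤ).eval wt := by
    intro e he hdvd
    obtain ⟨hne, hemem⟩ := Finset.mem_erase.mp he
    exact hne ((key e hemem hdvd).unique (key e₀ he₀ he₀d))
  have hM : ¬ (p:ℤ) ∣ ∏ e ∈ d.divisors.erase e₀, (cyclotomic e ℤ).eval wt := by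
    intro h
    obtain ⟨e, he, hed⟩ := hpz.exists_mem_finset_dvd h
    exact huniq e he hed
  have hcop : IsCoprime ((p:ℤ)^α) (∏ e ∈ d.divisors.erase e₀, (cyclotomic e ℤ).eval wt) :=
    (hpz.coprime_iff_not_dvd.mpr hM).pow_left
  have hsplit : (cyclotomic e₀ ℤ).eval wt * ∏ e ∈ d.divisors.erase e₀, (cyclotomic e ℤ).eval wt
      = wt^d - 1 := by
    rw [Finset.mul_prod_erase _ (fun e => (cyclotomic e ℤ).eval wt) he₀, hprod]
  have he₀α : (p:ℤ)^α ∣ (cyclotomic e₀ ℤ).eval wt :=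
    hcop.dvd_of_dvd_mul_right (by rw [hsplit]; exact h1)
  have hXe : (cyclotomic e₀ ℤ).eval wt ∣ wt^e₀ - 1 := by
    obtain ⟨g, hg⟩ := cyclotomic.dvd_X_pow_sub_one e₀ ℤ
    exact ⟨g.eval wt, by rw [← eval_mul, ← hg]; simp⟩
  have he₀eq : e₀ = d :=
    hord e₀ (Nat.dvd_of_mem_divisors he₀) (Nat.pos_of_mem_divisors he₀) (he₀α.trans hXe)
  rwa [he₀eq] at he₀α

theorem stmt9 (d : ℕ) (hd : 1 ≤ d) (f : ℤ[X]) (hf : f ≠ 0)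
    (hdeg : f.natDegree < d.totient)
    (w : ∀ q : ℕ, (ZMod q)ˣ) (hw : ∀ q, IsAdmissible d q → orderOf (w q) = d) :
    ∃ Cf nf : ℕ, 1 ≤ Cf ∧ 1 ≤ nf ∧
      ∀ p α : ℕ, p.Prime → Odd p → p ≡ 1 [MOD d] → 1 ≤ α → nf < p ^ α →
        ∀ wt : ℤ, ((wt : ZMod (p ^ α)) = ((w (p ^ α) : (ZMod (p ^ α))ˣ) : ZMod (p ^ α))) →
          p ^ (padicValInt p (f.eval wt)) ≤ Cf := by
  obtain ⟨u, v, N, hN, huv⟩ := exists_int_bezout d hd f hf hdeg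
  refine ⟨N.natAbs, N.natAbs, Int.natAbs_pos.mpr hN, Int.natAbs_pos.mpr hN, ?_⟩
  intro p α pp podd pmod hα hlt wt hwt
  haveI : Fact p.Prime := ⟨pp⟩
  have horder : orderOf (w (p ^ α)) = d := hw (p ^ α) ⟨p, α, pp, podd, pmod, hα, rfl⟩
  have hdp1 : d ∣ p - 1 := (Nat.modEq_iff_dvd' pp.one_lt.le).mp pmod.symm
  have hpd : ¬ p ∣ d := by
    intro h
    have h2 : p ∣ p - 1 := h.trans hdp1
    have h3 : 2 ≤ p := pp.two_le
    have := Nat.le_of_dvd (by omega) h2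
    omega
  -- generic divisibility criterion
  have hdvd_iff : ∀ e : ℕ, ((p:ℤ)^α ∣ wt^e - 1) ↔ (w (p ^ α)) ^ e = 1 := by
    intro e
    constructor
    · intro h
      have h' : ((wt ^ e - 1 : ℤ) : ZMod (p ^ α)) = 0 := by
        rw [ZMod.intCast_zmod_eq_zero_iff_dvd]
        exact_mod_cast h
      have h'' : ((w (p ^ α) : ZMod (p ^ α))) ^ e = 1 := by
        push_cast at h'
        rw [hwt, sub_eq_zero] at h'
        exact h'
      ext
      rw [Units.val_pow_eq_pow_val, h'', Units.val_one]
    · intro h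
      have h' : ((wt ^ e - 1 : ℤ) : ZMod (p ^ α)) = 0 := by
        push_cast
        rw [hwt, sub_eq_zero, ← Units.val_pow_eq_pow_val, h, Units.val_one]
      have := (ZMod.intCast_zmod_eq_zero_iff_dvd _ (p ^ α)).mp h'
      exact_mod_cast this
  have h1 : (p:ℤ)^α ∣ wt^d - 1 := by
    rw [hdvd_iff]
    rw [← horder]
    exact pow_orderOf_eq_one _
  have hord : ∀ e, e ∣ d → 0 < e → (p:ℤ)^α ∣ wt^e - 1 → e = d := by
    intro e hed hepos h
    rw [hdvd_iff] at h
    have hde : d ∣ e := by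
      rw [← horder]
      exact orderOf_dvd_of_pow_eq_one h
    exact Nat.dvd_antisymm hed hde
  have hΦ : (p:ℤ)^α ∣ (cyclotomic d ℤ).eval wt :=
    pow_dvd_cyclotomic_eval d p α hd pp hpd hα wt h1 hord
  have heq : u.eval wt * f.eval wt + v.eval wt * (cyclotomic d ℤ).eval wt = N := by
    have := congrArg (fun g : ℤ[X] => g.eval wt) huv
    simpa using this
  by_cases hz : f.eval wt = 0
  · have : padicValInt p (f.eval wt) = 0 := by simp [hz, padicValInt]
    rw [this, pow_zero]
    exact Int.natAbs_pos.mpr hN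
  · set t := padicValInt p (f.eval wt) with ht
    set m := min t α with hm
    have hmf : (p:ℤ)^m ∣ f.eval wt :=
      (pow_dvd_pow (p:ℤ) (min_le_left t α)).trans (padicValInt_dvd _)
    have hmΦ : (p:ℤ)^m ∣ (cyclotomic d ℤ).eval wt :=
      (pow_dvd_pow (p:ℤ) (min_le_right t α)).trans hΦ
    have hmN : (p:ℤ)^m ∣ N := by
      rw [← heq]
      exact dvd_add (Dvd.dvd.mul_left hmf _) (Dvd.dvd.mul_left hmΦ _)
    have hmN' : p ^ m ∣ N.natAbs := by
      have h2 := Int.natAbs_dvd_natAbs.mpr hmN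
      rwa [Int.natAbs_pow, Int.natAbs_natCast] at h2
    have hle : p ^ m ≤ N.natAbs := Nat.le_of_dvd (Int.natAbs_pos.mpr hN) hmN'
    have hmα : m < α := by
      by_contra hc
      push_neg at hc
      have : p ^ α ≤ p ^ m := Nat.pow_le_pow_right pp.pos hc
      omega
    have hmt : m = t := by omega
    rw [← hmt]
    exact hle
end
end

section
/- Let d ≥ 2 be an integer. The image of the map f : 𝕋^{d−1} → ℂ, (z_1,…,z_{d−1}) ↦ z_1 + ⋯ + z_{d−1} + 1/(z_1 z_2 ⋯ z_{d−1}), is exactly the set of traces of matrices in the special unitary group SU(d); that is, { f(z) : z ∈ 𝕋^{d−1} } = { tr(A) : A ∈ SU(d, ℂ) }. -/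
open MeasureTheory Filter Polynomial Topology

noncomputable section

open Matrix in
private lemma aux_eval (N : ℕ) (A : Matrix (Fin N) (Fin N) ℂ) (t : ℂ) :
    A.charpoly.eval t = (t • (1 : Matrix (Fin N) (Fin N) ℂ) - A).det := by
  rw [Matrix.charpoly, ← Polynomial.coe_evalRingHom, RingHom.map_det]
  congr 1
  ext i j
  by_cases h : i = j <;>
    simp [h, charmatrix_apply_eq, charmatrix_apply_ne, Matrix.one_apply, Matrix.sub_apply]

open Matrix in
private lemma aux_norm (N : ℕ) (A : Matrix (Fin N) (Fin N) ℂ)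
    (hA : A ∈ Matrix.unitaryGroup (Fin N) ℂ) {t : ℂ} (ht : t ∈ A.charpoly.roots) :
    ‖t‖ = 1 := by
  rw [mem_roots'] at ht
  have h0 : ((t • (1 : Matrix (Fin N) (Fin N) ℂ) - A)).det = 0 := by
    rw [← aux_eval]; exact ht.2
  obtain ⟨v, hv, hveq⟩ := (Matrix.exists_mulVec_eq_zero_iff).mpr h0
  have hAv : A.mulVec v = t • v := by
    rw [Matrix.sub_mulVec, Matrix.smul_mulVec, Matrix.one_mulVec, sub_eq_zero] at hveq
    exact hveq.symm
  have hstar : star A * A = 1 := Matrix.mem_unitaryGroup_iff'.mp hA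
  have key : star (A.mulVec v) ⬝ᵥ (A.mulVec v) = star v ⬝ᵥ v := by
    rw [Matrix.star_mulVec, ← Matrix.dotProduct_mulVec, Matrix.mulVec_mulVec,
      show Aᴴ = star A from rfl, hstar, Matrix.one_mulVec]
  rw [hAv, star_smul, smul_dotProduct, dotProduct_smul, smul_smul] at key
  have hc : star v ⬝ᵥ v ≠ 0 := by
    open scoped ComplexOrder in
    exact fun h => hv (dotProduct_star_self_eq_zero.mp h)
  have h1 : (star t * t : ℂ) = 1 :=
    mul_right_cancel₀ hc (by simpa [smul_eq_mul] using key.trans (one_mul _).symm)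
  have h2 : Complex.normSq t = 1 := by
    have : (Complex.normSq t : ℂ) = star t * t := by
      rw [Complex.normSq_eq_conj_mul_self]; rfl
    exact_mod_cast this.trans h1
  have h3 : ‖t‖ ^ 2 = 1 := by rw [← Complex.sq_norm] at h2; simpa using h2
  nlinarith [norm_nonneg t]

theorem stmt13 (d : ℕ) (hd : 2 ≤ d) :
    (Set.range fun z : Fin (d - 1) → Circle =>
        (∑ j : Fin (d - 1), (z j : ℂ)) + (∏ j : Fin (d - 1), (z j : ℂ))⁻¹)
      = Set.range fun A : Matrix.specialUnitaryGroup (Fin d) ℂ =>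
          Matrix.trace (A : Matrix (Fin d) (Fin d) ℂ) := by
  obtain ⟨n, rfl⟩ : ∃ n, d = n + 1 := ⟨d - 1, by omega⟩
  show (Set.range fun z : Fin n → Circle =>
      (∑ j : Fin n, (z j : ℂ)) + (∏ j : Fin n, (z j : ℂ))⁻¹)
    = Set.range fun A : Matrix.specialUnitaryGroup (Fin (n + 1)) ℂ =>
        Matrix.trace (A : Matrix (Fin (n + 1)) (Fin (n + 1)) ℂ)
  ext w
  simp only [Set.mem_range]
  constructor
  · rintro ⟨z, rfl⟩
    set P : ℂ := ∏ j : Fin n, (z j : ℂ) with hP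
    have hPnorm : ‖P‖ = 1 := by
      rw [hP, norm_prod]
      exact Finset.prod_eq_one fun j _ => by
        rw [Circle.norm_coe]
    have hPne : P ≠ 0 := by intro h; rw [h] at hPnorm; simp at hPnorm
    set v : Fin (n + 1) → ℂ := Fin.snoc (fun j => (z j : ℂ)) P⁻¹ with hv
    have hnorm : ∀ i, v i * star (v i) = 1 := by
      intro i
      have h1 : ‖v i‖ = 1 := by
        refine Fin.lastCases ?_ ?_ i
        · simp [hv, hPnorm]
        · intro j
          simp only [hv, Fin.snoc_castSucc]
          rw [Circle.norm_coe]
      have := Complex.mul_conj (v i)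
      rw [show star (v i) = (starRingEnd ℂ) (v i) from rfl, this]
      rw [← Complex.sq_norm, h1]
      norm_num
    have hmem : Matrix.diagonal v ∈ Matrix.specialUnitaryGroup (Fin (n + 1)) ℂ := by
      rw [Matrix.mem_specialUnitaryGroup_iff]
      constructor
      · rw [Matrix.mem_unitaryGroup_iff,
          show star (Matrix.diagonal v) = Matrix.diagonal (star v) by
            simp [Matrix.star_eq_conjTranspose, Matrix.diagonal_conjTranspose],
          Matrix.diagonal_mul_diagonal,
          show (fun i => v i * star v i) = fun _ : Fin (n + 1) => (1 : ℂ) from funext hnorm,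
          Matrix.diagonal_one]
      · rw [Matrix.det_diagonal, Fin.prod_univ_castSucc]
        simp only [hv, Fin.snoc_castSucc, Fin.snoc_last, ← hP]
        exact mul_inv_cancel₀ hPne
    refine ⟨⟨Matrix.diagonal v, hmem⟩, ?_⟩
    rw [Matrix.trace_diagonal, Fin.sum_univ_castSucc]
    simp only [hv, Fin.snoc_castSucc, Fin.snoc_last, ← hP]
  · rintro ⟨⟨A, hA⟩, rfl⟩
    rw [Matrix.mem_specialUnitaryGroup_iff] at hA
    obtain ⟨hAu, hAdet⟩ := hA
    have hsplit : A.charpoly.Splits := IsAlgClosed.splits A.charpoly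
    have hcard : Multiset.card A.charpoly.roots = n + 1 := by
      rw [(Polynomial.splits_iff_card_roots).mp hsplit]
      simp [Matrix.charpoly_natDegree_eq_dim]
    set l : List ℂ := A.charpoly.roots.toList with hl
    have hlen : l.length = n + 1 := by rw [hl, Multiset.length_toList, hcard]
    set lam : Fin (n + 1) → ℂ := fun i => l.get (Fin.cast hlen.symm i) with hlam
    have hmultiset : (l : Multiset ℂ) = A.charpoly.roots := Multiset.coe_toList _
    have hmemroots : ∀ i, lam i ∈ A.charpoly.roots := by
      intro i
      rw [← hmultiset]
      exact Multiset.mem_coe.mpr (List.get_mem l (Fin.cast hlen.symm i))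
    have hsum : ∑ i, lam i = A.charpoly.roots.sum := by
      rw [← hmultiset, Multiset.sum_coe,
        show l.sum = ∑ i : Fin l.length, l.get i from by rw [← List.sum_ofFn, List.ofFn_get]]
      exact Fintype.sum_equiv (finCongr hlen.symm) _ _ (fun i => rfl)
    have hprod : ∏ i, lam i = A.charpoly.roots.prod := by
      rw [← hmultiset, Multiset.prod_coe,
        show l.prod = ∏ i : Fin l.length, l.get i from by rw [← List.prod_ofFn, List.ofFn_get]]
      exact Fintype.prod_equiv (finCongr hlen.symm) _ _ (fun i => rfl)
    have hprod1 : ∏ i, lam i = 1 := by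
      rw [hprod, ← Matrix.det_eq_prod_roots_charpoly, hAdet]
    have htrace : A.trace = ∑ i, lam i := by
      rw [Matrix.trace_eq_sum_roots_charpoly, hsum]
    have hnorm1 : ∀ i, ‖lam i‖ = 1 := fun i => aux_norm _ A hAu (hmemroots i)
    refine ⟨fun j => ⟨lam j.castSucc, show lam j.castSucc ∈ Metric.sphere (0:ℂ) 1 from
      mem_sphere_zero_iff_norm.mpr (hnorm1 _)⟩, ?_⟩
    have hQ : (∏ j : Fin n, lam j.castSucc) * lam (Fin.last n) = 1 := by
      rw [← Fin.prod_univ_castSucc]; exact hprod1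
    have hQinv : (∏ j : Fin n, lam j.castSucc)⁻¹ = lam (Fin.last n) :=
      inv_eq_of_mul_eq_one_right hQ
    simp only
    rw [hQinv, htrace, Fin.sum_univ_castSucc]
end
end

section
/- Let d = r^b be a power of a prime number r, with b ≥ 1. Then for all z_1,…,z_{(r−1)r^{b−1}} ∈ 𝕋, g_d(z_1,…,z_{(r−1)r^{b−1}}) = Σ_{j=1}^{(r−1)r^{b−1}} z_j + Σ_{m=1}^{r^{b−1}} Π_{ℓ=0}^{r−2} z_{m+ℓ r^{b−1}}^{−1}; that is, the Laurent polynomial g_d of Definition of g_d coincides with this explicit map on 𝕋^{φ(d)} = 𝕋^{(r−1)r^{b−1}}. -/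
open MeasureTheory Filter Polynomial Topology

noncomputable section

lemma zpowSum {α : Type*} {w : ℂ} (hw : w ≠ 0) (s : Finset α) (f : α → ℤ) :
    w ^ (∑ i ∈ s, f i) = ∏ i ∈ s, w ^ f i := by
  classical
  induction s using Finset.induction with
  | empty => simp
  | insert _ _ h ih => rw [Finset.sum_insert h, Finset.prod_insert h, zpow_add₀ hw, ih]

lemma cCoeff_lt' {r b : ℕ} {k : ℕ} (hk : k < (r ^ b).totient)
    (j : ℕ) : cCoeff (r ^ b) k j = if j = k then 1 else 0 := by
  have h1 : ((X : ℤ[X]) ^ k) %ₘ cyclotomic (r ^ b) ℤ = X ^ k := by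
    rw [modByMonic_eq_self_iff (cyclotomic.monic _ _), degree_cyclotomic, degree_X_pow]
    exact_mod_cast hk
  rw [cCoeff, h1, coeff_X_pow]

lemma exp_lt' {r b : ℕ} (hr : r.Prime) (hb : 1 ≤ b) {m l : ℕ} (hm : m < r ^ (b - 1))
    (hl : l < r - 1) : m + l * r ^ (b - 1) < (r ^ b).totient := by
  rw [Nat.totient_prime_pow hr hb]
  calc m + l * r ^ (b - 1) < (l + 1) * r ^ (b - 1) := by rw [add_mul, one_mul, add_comm]; omega
    _ ≤ (r - 1) * r ^ (b - 1) := Nat.mul_le_mul_right _ (by omega)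
    _ = r ^ (b - 1) * (r - 1) := mul_comm _ _

lemma modByMonic_eq' {r b : ℕ} (hr : r.Prime) (hb : 1 ≤ b) {m : ℕ} (hm : m < r ^ (b - 1)) :
    ((X : ℤ[X]) ^ ((r ^ b).totient + m)) %ₘ cyclotomic (r ^ b) ℤ =
      -(∑ l ∈ Finset.range (r - 1), X ^ (m + l * r ^ (b - 1))) := by
  have h2r : 2 ≤ r := hr.two_le
  have hcyc : cyclotomic (r ^ b) ℤ = ∑ i ∈ Finset.range r, X ^ (i * r ^ (b - 1)) := by
    have h := cyclotomic_prime_pow_eq_geom_sum (R := ℤ) (p := r) (n := b - 1) hr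
    rw [show b - 1 + 1 = b by omega] at h
    rw [h]
    exact Finset.sum_congr rfl fun i _ => by rw [← pow_mul, mul_comm]
  have hphi : (r ^ b).totient = r ^ (b - 1) * (r - 1) := Nat.totient_prime_pow hr hb
  refine (div_modByMonic_unique (X ^ m) _ (cyclotomic.monic _ _) ⟨?_, ?_⟩).2
  · rw [hcyc, Finset.sum_mul]
    have h1 : ∀ i ∈ Finset.range r, (X : ℤ[X]) ^ (i * r ^ (b - 1)) * X ^ m
        = X ^ (m + i * r ^ (b - 1)) := fun i _ => by rw [← pow_add, add_comm]
    rw [Finset.sum_congr rfl h1,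
      show Finset.range r = Finset.range ((r - 1) + 1) by rw [Nat.sub_add_cancel (by omega)],
      Finset.sum_range_succ,
      show m + (r - 1) * r ^ (b - 1) = (r ^ b).totient + m by rw [hphi]; ring]
    ring
  · rw [degree_neg, degree_cyclotomic]
    refine lt_of_le_of_lt (degree_sum_le _ _) ?_
    rw [Finset.sup_lt_iff (by exact WithBot.bot_lt_coe _)]
    intro l hl
    rw [degree_X_pow, Nat.cast_lt]
    exact exp_lt' hr hb hm (Finset.mem_range.mp hl)

lemma cCoeff_ge' {r b : ℕ} (hr : r.Prime) (hb : 1 ≤ b) {m : ℕ} (hm : m < r ^ (b - 1))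
    (j : ℕ) : cCoeff (r ^ b) ((r ^ b).totient + m) j =
      ∑ l ∈ Finset.range (r - 1), -(if j = m + l * r ^ (b - 1) then 1 else 0) := by
  rw [cCoeff, modByMonic_eq' hr hb hm, coeff_neg, finset_sum_coeff, ← Finset.sum_neg_distrib]
  exact Finset.sum_congr rfl fun l _ => by rw [coeff_X_pow]

theorem stmt14 (r b : ℕ) (hr : r.Prime) (hb : 1 ≤ b) (z : Fin (r ^ b).totient → Circle) :
    gPoly (r ^ b) z =
      (∑ j : Fin (r ^ b).totient, (z j : ℂ)) +
      ∑ m ∈ Finset.range (r ^ (b - 1)), ∏ l ∈ Finset.range (r - 1),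
        (if h : m + l * r ^ (b - 1) < (r ^ b).totient
          then ((z ⟨m + l * r ^ (b - 1), h⟩ : ℂ)) else 1)⁻¹ := by
  classical
  have h2r : 2 ≤ r := hr.two_le
  have hphi : (r ^ b).totient = r ^ (b - 1) * (r - 1) := Nat.totient_prime_pow hr hb
  have hsplit : Finset.range (r ^ b) = Finset.range ((r ^ b).totient + r ^ (b - 1)) := by
    congr 1
    have h1 : r ^ b = r * r ^ (b - 1) := by
      rw [show b = (b - 1) + 1 from (by omega), pow_succ, mul_comm]
      congr 1
    have h2 : (r - 1) * r ^ (b - 1) = r * r ^ (b - 1) - r ^ (b - 1) := by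
      rw [Nat.sub_one_mul]
    have h3 : 0 < r ^ (b - 1) := pow_pos (by omega) _
    have h4 : (r - 1) * r ^ (b - 1) = r ^ (b - 1) * (r - 1) := mul_comm _ _
    have h5 : r ^ (b - 1) ≤ r * r ^ (b - 1) := Nat.le_mul_of_pos_left _ (by omega)
    omega
  rw [gPoly, hsplit, Finset.sum_range_add]
  congr 1
  · rw [Finset.sum_range]
    refine Finset.sum_congr rfl fun k _ => ?_
    refine (Finset.prod_eq_single k (fun j _ hj => ?_)
      (fun h => absurd (Finset.mem_univ k) h)).trans ?_
    · rw [cCoeff_lt' k.isLt, if_neg (fun h => hj (Fin.ext h)), zpow_zero]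
    · rw [cCoeff_lt' k.isLt, if_pos rfl, zpow_one]
  · refine Finset.sum_congr rfl fun m hm => ?_
    have hm' : m < r ^ (b - 1) := Finset.mem_range.mp hm
    calc ∏ j : Fin (r ^ b).totient, (z j : ℂ) ^ cCoeff (r ^ b) ((r ^ b).totient + m) (j : ℕ)
        = ∏ j : Fin (r ^ b).totient, ∏ l ∈ Finset.range (r - 1),
            (z j : ℂ) ^ (-(if (j : ℕ) = m + l * r ^ (b - 1) then (1 : ℤ) else 0)) :=
          Finset.prod_congr rfl fun j _ => by
            rw [cCoeff_ge' hr hb hm', zpowSum (Circle.coe_ne_zero _)]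
      _ = ∏ l ∈ Finset.range (r - 1), ∏ j : Fin (r ^ b).totient,
            (z j : ℂ) ^ (-(if (j : ℕ) = m + l * r ^ (b - 1) then (1 : ℤ) else 0)) :=
          Finset.prod_comm
      _ = _ := by
          refine Finset.prod_congr rfl fun l hl => ?_
          have hlt : m + l * r ^ (b - 1) < (r ^ b).totient :=
            exp_lt' hr hb hm' (Finset.mem_range.mp hl)
          rw [dif_pos hlt]
          refine Finset.prod_eq_single (⟨m + l * r ^ (b - 1), hlt⟩ : Fin _)
            (fun j _ hj => by rw [if_neg (fun h => hj (Fin.ext h)), neg_zero, zpow_zero])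
            (fun h => absurd (Finset.mem_univ _) h)
          |>.trans ?_
          rw [if_pos rfl, zpow_neg_one]
end
end

section
/- Let d = r^b be a power of a prime number r, with b ≥ 1. Then the image of 𝕋^{φ(d)} under g_d equals the Minkowski sum of r^{b−1} copies of the image of 𝕋^{r−1} under g_r; that is, g_d(𝕋^{φ(d)}) = { ξ_1 + ⋯ + ξ_{r^{b−1}} : ξ_1,…,ξ_{r^{b−1}} ∈ g_r(𝕋^{r−1}) }, where g_r(z_1,…,z_{r−1}) = z_1 + ⋯ + z_{r−1} + 1/(z_1⋯z_{r−1}). -/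
open MeasureTheory Filter Polynomial Topology

noncomputable section

lemma phi_eq {r b : ℕ} (hr : r.Prime) (hb : 1 ≤ b) :
    cyclotomic (r ^ b) ℤ = ∑ i ∈ Finset.range r, (X ^ r ^ (b - 1)) ^ i := by
  have h : b = (b - 1) + 1 := (Nat.succ_pred_eq_of_pos hb).symm
  conv_lhs => rw [h]
  exact cyclotomic_prime_pow_eq_geom_sum hr

lemma modA {r b k : ℕ} (hr : r.Prime) (hb : 1 ≤ b) (hk : k < (r - 1) * r ^ (b - 1)) :
    (X : ℤ[X]) ^ k %ₘ cyclotomic (r ^ b) ℤ = X ^ k := by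
  rw [modByMonic_eq_self_iff (cyclotomic.monic _ ℤ), degree_cyclotomic, degree_X_pow,
    Nat.totient_prime_pow hr (by omega)]
  exact_mod_cast lt_of_lt_of_eq hk (Nat.mul_comm _ _)

lemma modB {r b u : ℕ} (hr : r.Prime) (hb : 1 ≤ b) (hu : u < r ^ (b - 1)) :
    (X : ℤ[X]) ^ (u + r ^ (b - 1) * (r - 1)) %ₘ cyclotomic (r ^ b) ℤ =
      -∑ i ∈ Finset.range (r - 1), X ^ (u + r ^ (b - 1) * i) := by
  set R := r ^ (b - 1) with hR
  have hR0 : 0 < R := Nat.pow_pos hr.pos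
  have hdegsum : (∑ i ∈ Finset.range (r - 1), (X:ℤ[X]) ^ (u + R * i)).degree
      < ((r - 1) * R : ℕ) := by
    refine lt_of_le_of_lt (degree_sum_le _ _) ?_
    rw [Finset.sup_lt_iff (by exact_mod_cast WithBot.bot_lt_coe _)]
    intro i hi
    rw [degree_X_pow, Nat.cast_lt]
    have hi' : i < r - 1 := Finset.mem_range.mp hi
    calc u + R * i < R + R * i := by omega
    _ = R * (i + 1) := by ring
    _ ≤ R * (r - 1) := Nat.mul_le_mul_left _ (by omega)
    _ = (r - 1) * R := Nat.mul_comm _ _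
  have key : (X : ℤ[X]) ^ (u + R * (r - 1)) =
      X ^ u * cyclotomic (r ^ b) ℤ + (-∑ i ∈ Finset.range (r - 1), X ^ (u + R * i)) := by
    rw [phi_eq hr hb, ← hR, Finset.mul_sum]
    have h2 : ∀ i, (X:ℤ[X]) ^ u * (X ^ R) ^ i = X ^ (u + R * i) := by
      intro i; rw [← pow_mul, ← pow_add]
    simp_rw [h2]
    have h3 := Finset.sum_range_succ (fun i => (X:ℤ[X]) ^ (u + R * i)) (r - 1)
    rw [show r - 1 + 1 = r from by have := hr.two_le; omega] at h3
    rw [h3]; ring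
  rw [key, add_modByMonic]
  have h0 : ((X:ℤ[X]) ^ u * cyclotomic (r ^ b) ℤ) %ₘ cyclotomic (r ^ b) ℤ = 0 :=
    (modByMonic_eq_zero_iff_dvd (cyclotomic.monic _ ℤ)).2 (dvd_mul_left _ _)
  rw [h0, zero_add, neg_modByMonic,
    (modByMonic_eq_self_iff (cyclotomic.monic _ ℤ)).2]
  rw [degree_cyclotomic, Nat.totient_prime_pow hr (by omega)]
  exact lt_of_lt_of_eq hdegsum (by rw [Nat.mul_comm])

lemma uniq_aux {R u u' i i' : ℕ} (hu : u < R) (hu' : u' < R) :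
    u' + R * i' = u + R * i ↔ (u' = u ∧ i' = i) := by
  constructor
  · intro h
    have hR0 : 0 < R := by omega
    have h1 : (u' + R * i') % R = (u + R * i) % R := by rw [h]
    rw [Nat.add_mul_mod_self_left, Nat.add_mul_mod_self_left,
      Nat.mod_eq_of_lt hu', Nat.mod_eq_of_lt hu] at h1
    refine ⟨h1, ?_⟩
    subst h1
    have h2 : R * i' = R * i := by omega
    exact Nat.eq_of_mul_eq_mul_left hR0 h2
  · rintro ⟨rfl, rfl⟩; rfl


lemma cCoeffA {r b k j : ℕ} (hr : r.Prime) (hb : 1 ≤ b) (hk : k < (r - 1) * r ^ (b - 1)) :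
    cCoeff (r ^ b) k j = if j = k then 1 else 0 := by
  rw [cCoeff, modA hr hb hk, coeff_X_pow]

lemma cCoeffB {r b u u' i' : ℕ} (hr : r.Prime) (hb : 1 ≤ b) (hu : u < r ^ (b - 1))
    (hu' : u' < r ^ (b - 1)) (hi' : i' < r - 1) :
    cCoeff (r ^ b) (u + r ^ (b - 1) * (r - 1)) (u' + r ^ (b - 1) * i') =
      if u' = u then -1 else 0 := by
  rw [cCoeff, modB hr hb hu, coeff_neg, finset_sum_coeff]
  simp_rw [coeff_X_pow]
  have h : ∀ i ∈ Finset.range (r - 1),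
      (if u' + r ^ (b - 1) * i' = u + r ^ (b - 1) * i then (1:ℤ) else 0) =
      if (u' = u ∧ i = i') then 1 else 0 := by
    intro i _
    by_cases h1 : u' + r ^ (b - 1) * i' = u + r ^ (b - 1) * i
    · obtain ⟨h2, h3⟩ := (uniq_aux hu hu').mp h1
      simp [h1, h2, h3.symm]
    · rw [if_neg h1, if_neg]
      intro ⟨h2, h3⟩
      exact h1 ((uniq_aux hu hu').mpr ⟨h2, h3.symm⟩)
  rw [Finset.sum_congr rfl h]
  by_cases h2 : u' = u
  · simp only [h2, true_and]
    rw [Finset.sum_ite_eq' (Finset.range (r - 1)) i' (fun _ => (1:ℤ)),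
      if_pos (Finset.mem_range.mpr hi')]
    simp [h2]
  · simp [h2]


lemma htot {r b : ℕ} (hr : r.Prime) (hb : 1 ≤ b) :
    (r - 1) * r ^ (b - 1) = (r ^ b).totient := by
  rw [Nat.totient_prime_pow hr (by omega), Nat.mul_comm]

def eIdx {r b : ℕ} (h : (r - 1) * r ^ (b - 1) = (r ^ b).totient) :
    Fin (r - 1) × Fin (r ^ (b - 1)) ≃ Fin ((r ^ b).totient) :=
  finProdFinEquiv.trans (finCongr h)

lemma eIdx_val {r b : ℕ} (h : (r - 1) * r ^ (b - 1) = (r ^ b).totient)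
    (p : Fin (r - 1) × Fin (r ^ (b - 1))) :
    ((eIdx h p : Fin ((r ^ b).totient)) : ℕ) = (p.2 : ℕ) + r ^ (b - 1) * (p.1 : ℕ) := rfl

lemma prodA {r b : ℕ} (hr : r.Prime) (hb : 1 ≤ b) (z : Fin ((r ^ b).totient) → Circle)
    (i₀ : Fin (r - 1)) (u₀ : Fin (r ^ (b - 1))) :
    ∏ j : Fin ((r ^ b).totient),
        (z j : ℂ) ^ cCoeff (r ^ b) ((u₀ : ℕ) + r ^ (b - 1) * (i₀ : ℕ)) (j : ℕ)
      = z (eIdx (htot hr hb) (i₀, u₀)) := by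
  have hk : (u₀ : ℕ) + r ^ (b - 1) * (i₀ : ℕ) < (r - 1) * r ^ (b - 1) := by
    calc (u₀ : ℕ) + r ^ (b - 1) * (i₀ : ℕ) < r ^ (b - 1) + r ^ (b - 1) * (i₀ : ℕ) := by
          have := u₀.isLt; omega
    _ = r ^ (b - 1) * ((i₀ : ℕ) + 1) := by ring
    _ ≤ r ^ (b - 1) * (r - 1) := Nat.mul_le_mul_left _ (by have := i₀.isLt; omega)
    _ = (r - 1) * r ^ (b - 1) := Nat.mul_comm _ _
  rw [← Equiv.prod_comp (eIdx (htot hr hb))]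
  have hfac : ∀ p : Fin (r - 1) × Fin (r ^ (b - 1)),
      (z (eIdx (htot hr hb) p) : ℂ) ^
          cCoeff (r ^ b) ((u₀ : ℕ) + r ^ (b - 1) * (i₀ : ℕ)) ((eIdx (htot hr hb) p : ℕ))
        = if p = (i₀, u₀) then (z (eIdx (htot hr hb) p) : ℂ) else 1 := by
    intro p
    rw [eIdx_val, cCoeffA hr hb hk]
    by_cases hp : p = (i₀, u₀)
    · subst hp; rw [if_pos rfl, if_pos rfl, zpow_one]
    · rw [if_neg, if_neg hp, zpow_zero]
      intro hcase
      obtain ⟨h1, h2⟩ := (uniq_aux u₀.isLt p.2.isLt).mp hcase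
      exact hp (Prod.ext (Fin.ext h2) (Fin.ext h1))
  rw [Finset.prod_congr rfl (fun p _ => hfac p),
    Finset.prod_ite_eq' Finset.univ (i₀, u₀) (fun p => (z (eIdx (htot hr hb) p) : ℂ)),
    if_pos (Finset.mem_univ _)]

lemma prodB {r b : ℕ} (hr : r.Prime) (hb : 1 ≤ b) (z : Fin ((r ^ b).totient) → Circle)
    (u₀ : Fin (r ^ (b - 1))) :
    ∏ j : Fin ((r ^ b).totient),
        (z j : ℂ) ^ cCoeff (r ^ b) ((u₀ : ℕ) + r ^ (b - 1) * (r - 1)) (j : ℕ)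
      = (∏ i : Fin (r - 1), (z (eIdx (htot hr hb) (i, u₀)) : ℂ))⁻¹ := by
  rw [← Equiv.prod_comp (eIdx (htot hr hb))]
  have hfac : ∀ p : Fin (r - 1) × Fin (r ^ (b - 1)),
      (z (eIdx (htot hr hb) p) : ℂ) ^
          cCoeff (r ^ b) ((u₀ : ℕ) + r ^ (b - 1) * (r - 1)) ((eIdx (htot hr hb) p : ℕ))
        = if p.2 = u₀ then (z (eIdx (htot hr hb) p) : ℂ)⁻¹ else 1 := by
    intro p
    rw [eIdx_val, cCoeffB hr hb u₀.isLt p.2.isLt p.1.isLt]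
    by_cases hp : p.2 = u₀
    · rw [if_pos (by rw [hp]), if_pos hp, zpow_neg_one]
    · rw [if_neg (fun h => hp (Fin.ext h)), if_neg hp, zpow_zero]
  rw [Finset.prod_congr rfl (fun p _ => hfac p), Fintype.prod_prod_type]
  rw [← Finset.prod_inv_distrib]
  refine Finset.prod_congr rfl fun i _ => ?_
  rw [Finset.prod_ite_eq' Finset.univ u₀ (fun u => (z (eIdx (htot hr hb) (i, u)) : ℂ)⁻¹),
    if_pos (Finset.mem_univ _)]

lemma sum_range_mul_aux {M : Type*} [AddCommMonoid M] (f : ℕ → M) (a c : ℕ) :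
    ∑ k ∈ Finset.range (a * c), f k = ∑ i : Fin a, ∑ u : Fin c, f ((u : ℕ) + c * (i : ℕ)) := by
  rw [← Fin.sum_univ_eq_sum_range,
    ← Equiv.sum_comp (finProdFinEquiv : Fin a × Fin c ≃ Fin (a * c)) (fun k => f (k : ℕ)),
    Fintype.sum_prod_type]
  rfl

lemma gPoly_eq {r b : ℕ} (hr : r.Prime) (hb : 1 ≤ b) (z : Fin ((r ^ b).totient) → Circle) :
    gPoly (r ^ b) z = ∑ u : Fin (r ^ (b - 1)),
      ((∑ i : Fin (r - 1), (z (eIdx (htot hr hb) (i, u)) : ℂ)) +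
        (∏ i : Fin (r - 1), (z (eIdx (htot hr hb) (i, u)) : ℂ))⁻¹) := by
  have hr2 := hr.two_le
  have hrb : r ^ b = r * r ^ (b - 1) := by
    conv_lhs => rw [show b = (b - 1) + 1 from by omega]
    rw [pow_succ']
  rw [gPoly]
  have step1 : ∑ k ∈ Finset.range (r ^ b),
        (∏ j : Fin ((r ^ b).totient), (z j : ℂ) ^ cCoeff (r ^ b) k (j : ℕ))
      = ∑ i : Fin r, ∑ u : Fin (r ^ (b - 1)),
        ∏ j : Fin ((r ^ b).totient),
          (z j : ℂ) ^ cCoeff (r ^ b) ((u : ℕ) + r ^ (b - 1) * (i : ℕ)) (j : ℕ) := by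
    have h := sum_range_mul_aux
      (fun k => ∏ j : Fin ((r ^ b).totient), (z j : ℂ) ^ cCoeff (r ^ b) k (j : ℕ))
      r (r ^ (b - 1))
    rw [← hrb] at h
    exact h
  rw [step1]
  have step2 : ∀ F : ℕ → ℂ, ∑ i : Fin r, F (i : ℕ) =
      (∑ i : Fin (r - 1), F (i : ℕ)) + F (r - 1) := by
    intro F
    rw [Fin.sum_univ_eq_sum_range, Fin.sum_univ_eq_sum_range]
    have h3 := Finset.sum_range_succ F (r - 1)
    rw [show r - 1 + 1 = r from by omega] at h3
    exact h3
  rw [step2 (fun i => ∑ u : Fin (r ^ (b - 1)),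
    ∏ j : Fin ((r ^ b).totient), (z j : ℂ) ^ cCoeff (r ^ b) ((u : ℕ) + r ^ (b - 1) * i) (j : ℕ))]
  rw [Finset.sum_comm, ← Finset.sum_add_distrib]
  refine Finset.sum_congr rfl fun u _ => ?_
  congr 1
  · exact Finset.sum_congr rfl fun i _ => prodA hr hb z i u
  · exact prodB hr hb z u

theorem stmt15 (r b : ℕ) (hr : r.Prime) (hb : 1 ≤ b) :
    Set.range (gPoly (r ^ b)) =
      {w : ℂ | ∃ ξ : Fin (r ^ (b - 1)) → ℂ,
        (∀ t : Fin (r ^ (b - 1)), ξ t ∈ Set.range (fun z : Fin (r - 1) → Circle =>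
          (∑ j : Fin (r - 1), (z j : ℂ)) + (∏ j : Fin (r - 1), (z j : ℂ))⁻¹)) ∧
        w = ∑ t : Fin (r ^ (b - 1)), ξ t} := by
  ext w
  simp only [Set.mem_range, Set.mem_setOf_eq]
  constructor
  · rintro ⟨z, rfl⟩
    refine ⟨fun u => (∑ i : Fin (r - 1), (z (eIdx (htot hr hb) (i, u)) : ℂ)) +
      (∏ i : Fin (r - 1), (z (eIdx (htot hr hb) (i, u)) : ℂ))⁻¹,
      fun u => ⟨fun i => z (eIdx (htot hr hb) (i, u)), rfl⟩, ?_⟩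
    exact gPoly_eq hr hb z
  · rintro ⟨ξ, hmem, rfl⟩
    choose Z hZ using hmem
    refine ⟨fun j => Z ((eIdx (htot hr hb)).symm j).2 ((eIdx (htot hr hb)).symm j).1, ?_⟩
    rw [gPoly_eq hr hb]
    refine Finset.sum_congr rfl fun u _ => ?_
    simp only [Equiv.symm_apply_apply]
    exact hZ u
end
end

section
/- Let d ≥ 1, m = (m_1,…,m_n) ∈ ℤ^n, and let q be a d-admissible integer. Let w_q be an element of order d in (ℤ/qℤ)× and let a_1,…,a_n ∈ ℤ/qℤ. For each i ∈ {1,…,n} and 0 ≤ j < φ(d_i), set z_{i,j} := e(a_i (w_q^{m_i})^j / q) ∈ 𝕋 (well-defined since e(c/q) depends only on the class c modulo q). Then Σ_{x ∈ (ℤ/qℤ)×, x^d = 1} e((a_1 x^{m_1} + ⋯ + a_n x^{m_n})/q) = f_{d,m}((z_{1,j})_{0≤j<φ(d_1)}, …, (z_{n,j})_{0≤j<φ(d_n)}). In particular, every such exponential sum lies in the image of f_{d,m}. -/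
open MeasureTheory Filter Polynomial Topology

noncomputable section

lemma aux_card_ker {p α : ℕ} (hp : p.Prime) (hα : 1 ≤ α) :
    Nat.card (ZMod.unitsMap (dvd_pow_self p (Nat.one_le_iff_ne_zero.mp hα))).ker = p ^ (α - 1) := by
  have : Fact p.Prime := ⟨hp⟩
  have hq : NeZero (p ^ α) := ⟨pow_ne_zero _ hp.pos.ne'⟩
  set f := ZMod.unitsMap (dvd_pow_self p (Nat.one_le_iff_ne_zero.mp hα))
  have hsurj : Function.Surjective f := ZMod.unitsMap_surjective _
  have h1 : Nat.card (ZMod (p^α))ˣ = Nat.card ((ZMod (p^α))ˣ ⧸ f.ker) * Nat.card f.ker :=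
    Subgroup.card_eq_card_quotient_mul_card_subgroup f.ker
  have h2 : Nat.card ((ZMod (p^α))ˣ ⧸ f.ker) = Nat.card (ZMod p)ˣ :=
    Nat.card_congr (QuotientGroup.quotientKerEquivOfSurjective f hsurj).toEquiv
  have h3 : Nat.card (ZMod (p^α))ˣ = p ^ (α - 1) * (p - 1) := by
    rw [Nat.card_eq_fintype_card, ZMod.card_units_eq_totient, Nat.totient_prime_pow hp hα]
  have h4 : Nat.card (ZMod p)ˣ = p - 1 := by
    rw [Nat.card_eq_fintype_card, ZMod.card_units_eq_totient, Nat.totient_prime hp]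
  rw [h2, h4, h3] at h1
  have hp1 : 0 < p - 1 := by have := hp.two_le; omega
  nlinarith [Nat.card_pos (α := f.ker), h1]

lemma aux_ker_eq_one {p α : ℕ} (hp : p.Prime) (hα : 1 ≤ α) {e : ℕ} (he : e.Coprime p)
    (x : (ZMod (p^α))ˣ)
    (hx : ZMod.unitsMap (dvd_pow_self p (Nat.one_le_iff_ne_zero.mp hα)) x = 1)
    (hxe : x ^ e = 1) : x = 1 := by
  set f := ZMod.unitsMap (dvd_pow_self p (Nat.one_le_iff_ne_zero.mp hα))
  have hmem : x ∈ f.ker := hx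
  have h1 : orderOf (⟨x, hmem⟩ : f.ker) ∣ p ^ (α - 1) := by
    rw [← aux_card_ker hp hα]; exact orderOf_dvd_natCard _
  have h2 : orderOf x ∣ p ^ (α - 1) := by
    rwa [← Subgroup.orderOf_mk x hmem]
  have h3 : orderOf x ∣ e := orderOf_dvd_of_pow_eq_one hxe
  have h4 : orderOf x ∣ Nat.gcd e (p ^ (α - 1)) := Nat.dvd_gcd h3 h2
  rw [Nat.Coprime.gcd_eq_one (he.pow_right _)] at h4
  exact orderOf_eq_one_iff.mp (Nat.dvd_one.mp h4)

lemma aux_orderOf_unitsMap {p α : ℕ} (hp : p.Prime) (hα : 1 ≤ α) {e : ℕ} (he : e.Coprime p)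
    (x : (ZMod (p^α))ˣ) (hord : orderOf x = e) :
    orderOf (ZMod.unitsMap (dvd_pow_self p (Nat.one_le_iff_ne_zero.mp hα)) x) = e := by
  set f := ZMod.unitsMap (dvd_pow_self p (Nat.one_le_iff_ne_zero.mp hα))
  have h1 : orderOf (f x) ∣ e := hord ▸ orderOf_map_dvd f x
  have h2 : x ^ (orderOf (f x)) = 1 := by
    apply aux_ker_eq_one hp hα he
    · show f _ = 1
      rw [map_pow, pow_orderOf_eq_one]
    · rw [← pow_mul, mul_comm, pow_mul, ← hord, pow_orderOf_eq_one, one_pow]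
  have h3 : e ∣ orderOf (f x) := hord ▸ orderOf_dvd_of_pow_eq_one h2
  exact Nat.dvd_antisymm h1 h3

lemma aux_coprime {p e : ℕ} (hp : p.Prime) (he : e ∣ p - 1) : e.Coprime p := by
  have h2 := hp.two_le
  have : ¬ p ∣ e := by
    intro h
    have : p ∣ p - 1 := h.trans he
    have := Nat.le_of_dvd (by omega) this
    omega
  exact Nat.Coprime.symm ((Nat.Prime.coprime_iff_not_dvd hp).mpr this)

lemma aux_cyclotomic_eval_zero {p α : ℕ} (hp : p.Prime) (hα : 1 ≤ α) {e : ℕ}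
    (he : e ∣ p - 1) (he0 : 0 < e) (ζ : (ZMod (p^α))ˣ) (hord : orderOf ζ = e) :
    (cyclotomic e (ZMod (p^α))).eval (ζ : ZMod (p^α)) = 0 := by
  have : Fact p.Prime := ⟨hp⟩
  have hq : NeZero (p ^ α) := ⟨pow_ne_zero _ hp.pos.ne'⟩
  have hec : e.Coprime p := aux_coprime hp he
  set π : ZMod (p^α) →+* ZMod p := ZMod.castHom (dvd_pow_self p (Nat.one_le_iff_ne_zero.mp hα)) _
  set f := ZMod.unitsMap (dvd_pow_self p (Nat.one_le_iff_ne_zero.mp hα))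
  have hfeval : ∀ (N : ℕ) (y : ZMod (p^α)), π ((cyclotomic N (ZMod (p^α))).eval y)
      = (cyclotomic N (ZMod p)).eval (π y) := by
    intro N y
    rw [← eval₂_hom, ← eval_map, map_cyclotomic]
  have hcoe : π (ζ : ZMod (p^α)) = ((f ζ : (ZMod p)ˣ) : ZMod p) := by
    rfl
  -- each proper-divisor cyclotomic value is a unit
  have hunit : ∀ e' ∈ e.properDivisors, IsUnit ((cyclotomic e' (ZMod (p^α))).eval (ζ : ZMod (p^α))) := by
    intro e' he'
    obtain ⟨he'd, he'lt⟩ := Nat.mem_properDivisors.mp he'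
    by_contra hnu
    -- nonunit means π of it is 0
    set y := (cyclotomic e' (ZMod (p^α))).eval (ζ : ZMod (p^α))
    have hy0 : π y = 0 := by
      by_contra hy
      apply hnu
      have : ¬ p ∣ y.val := by
        intro hdvd
        apply hy
        have : π y = ((y.val : ℕ) : ZMod p) := by
          rw [ZMod.castHom_apply, ← ZMod.natCast_val]
        rw [this, ZMod.natCast_eq_zero_iff]
        exact hdvd
      have hcop : y.val.Coprime (p ^ α) :=
        Nat.Coprime.pow_right _ (Nat.Coprime.symm ((Nat.Prime.coprime_iff_not_dvd hp).mpr this))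
      have := (ZMod.isUnit_iff_coprime y.val (p ^ α)).mpr hcop
      rwa [ZMod.natCast_val, ZMod.cast_id] at this
    -- so the reduction is a root of cyclotomic e' over ZMod p, hence (f ζ)^e' = 1
    rw [hfeval, hcoe] at hy0
    have hroot : (((f ζ) : (ZMod p)ˣ) : ZMod p) ^ e' - 1 = 0 := by
      obtain ⟨g, hg⟩ := cyclotomic.dvd_X_pow_sub_one e' (ZMod p)
      have := congrArg (Polynomial.eval (((f ζ) : (ZMod p)ˣ) : ZMod p)) hg
      simp only [eval_mul, eval_sub, eval_pow, eval_X, eval_one] at this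
      rw [this, hy0, zero_mul]
    have hpow : (f ζ) ^ e' = 1 := by
      ext
      push_cast
      linear_combination hroot
    have horder : orderOf (f ζ) = e := aux_orderOf_unitsMap hp hα hec ζ hord
    have := horder ▸ orderOf_dvd_of_pow_eq_one hpow
    have he'pos : 0 < e' := Nat.pos_of_mem_divisors (Nat.mem_divisors.mpr ⟨he'd, he0.ne'⟩)
    have := Nat.le_of_dvd he'pos this
    omega
  -- total product is zero
  have hprod : ∏ e' ∈ e.divisors, (cyclotomic e' (ZMod (p^α))).eval (ζ : ZMod (p^α)) = 0 := by
    have h1 := prod_cyclotomic_eq_X_pow_sub_one he0 (ZMod (p^α))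
    have := congrArg (Polynomial.eval (ζ : ZMod (p^α))) h1
    rw [eval_prod] at this
    simp only [eval_sub, eval_pow, eval_X, eval_one] at this
    rw [this]
    have : ((ζ : ZMod (p^α))) ^ e = 1 := by
      rw [← Units.val_pow_eq_pow_val, ← hord, pow_orderOf_eq_one, Units.val_one]
    rw [this, sub_self]
  rw [← Nat.cons_self_properDivisors he0.ne', Finset.prod_cons] at hprod
  have hU : IsUnit (∏ e' ∈ e.properDivisors, (cyclotomic e' (ZMod (p^α))).eval (ζ : ZMod (p^α))) :=
    Finset.prod_induction _ IsUnit (fun a b ha hb => ha.mul hb) isUnit_one hunit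
  exact (hU.mul_left_eq_zero).mp hprod

lemma aux_sum_cCoeff {R : Type*} [CommRing R] {e : ℕ} (he : 0 < e) (u : R)
    (hu : (cyclotomic e R).eval u = 0) (k : ℕ) :
    ∑ j : Fin e.totient, (cCoeff e k j : R) * u ^ (j : ℕ) = u ^ k := by
  set f := ((X : ℤ[X]) ^ k) %ₘ cyclotomic e ℤ with hf
  set g := f.map (Int.castRingHom R) with hg
  have hdeg : g.natDegree < e.totient := by
    rcases eq_or_ne f 0 with h | h
    · rw [hg, h, Polynomial.map_zero, natDegree_zero]
      exact Nat.totient_pos.mpr he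
    · have h1 : f.degree < (cyclotomic e ℤ).degree :=
        degree_modByMonic_lt _ (cyclotomic.monic e ℤ)
      rw [degree_cyclotomic] at h1
      have h2 : f.natDegree < e.totient := (natDegree_lt_iff_degree_lt h).mpr h1
      exact lt_of_le_of_lt (natDegree_map_le) h2
  have heval : g.eval u = ∑ j ∈ Finset.range e.totient, g.coeff j * u ^ j :=
    eval_eq_sum_range' hdeg u
  have hcoeff : ∀ j, g.coeff j = (cCoeff e k j : R) := by
    intro j; rw [hg, coeff_map]; rfl
  have hmain : g.eval u = u ^ k := by
    have h1 : f + cyclotomic e ℤ * (((X : ℤ[X]) ^ k) /ₘ cyclotomic e ℤ) = (X : ℤ[X]) ^ k :=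
      modByMonic_add_div _ _
    have := congrArg (fun P => Polynomial.eval u (P.map (Int.castRingHom R))) h1
    simp only [Polynomial.map_add, Polynomial.map_mul, Polynomial.map_pow, Polynomial.map_X,
      eval_add, eval_mul, eval_pow, eval_X, map_cyclotomic] at this
    rw [hu, zero_mul, add_zero] at this
    exact this
  rw [← hmain, heval, Finset.sum_range]
  exact Finset.sum_congr rfl fun j _ => by rw [hcoeff]

lemma aux_orderOf_zpow {G : Type*} [Group G] [Finite G] (w : G) (m : ℤ) {d : ℕ}
    (hw : orderOf w = d) : orderOf (w ^ m) = dSub d m := by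
  have hgcd : Int.gcd (d : ℤ) m = Nat.gcd d m.natAbs := by
    simp [Int.gcd]
  have hnat : orderOf (w ^ (m.natAbs)) = dSub d m := by
    rw [orderOf_pow, hw, dSub, hgcd]
  rcases Int.natAbs_eq m with h | h
  · rw [h, zpow_natCast]; exact hnat
  · have hwm : w ^ m = (w ^ m.natAbs)⁻¹ := by
      conv_lhs => rw [h]
      rw [zpow_neg, zpow_natCast]
    rw [hwm, orderOf_inv]; exact hnat

lemma aux_set_eq {p α d : ℕ} (hp : p.Prime) (hα : 1 ≤ α) (hd : 0 < d) (hdp : d ∣ p - 1)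
    (w : (ZMod (p^α))ˣ) (hw : orderOf w = d) :
    {x : (ZMod (p^α))ˣ | x ^ d = 1} = ↑((Finset.range d).image (w ^ ·)) := by
  have : Fact p.Prime := ⟨hp⟩
  have hq : NeZero (p ^ α) := ⟨pow_ne_zero _ hp.pos.ne'⟩
  have hdc : d.Coprime p := aux_coprime hp hdp
  set f := ZMod.unitsMap (dvd_pow_self p (Nat.one_le_iff_ne_zero.mp hα)) with hfdef
  have hfw : orderOf (f w) = d := aux_orderOf_unitsMap hp hα hdc w hw
  ext x
  simp only [Set.mem_setOf_eq, Finset.coe_image, Finset.coe_range, Set.mem_image, Set.mem_Iio]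
  constructor
  · intro hx
    -- reduce mod p
    have hfx : (f x) ^ d = 1 := by rw [← map_pow, hx, map_one]
    classical
    set F : Finset (ZMod p)ˣ := (Finset.range d).image (fun k => (f w) ^ k) with hF
    set Sol : Finset (ZMod p)ˣ := Finset.filter (fun a => a ^ d = 1) Finset.univ with hSol
    have hFS : F ⊆ Sol := by
      intro y hy
      obtain ⟨k, _, rfl⟩ := Finset.mem_image.mp hy
      simp only [hSol, Finset.mem_filter, Finset.mem_univ, true_and]
      rw [← pow_mul, mul_comm, pow_mul, ← hfw, pow_orderOf_eq_one, one_pow]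
    have hcardF : F.card = d := by
      rw [hF, Finset.card_image_of_injOn, Finset.card_range]
      intro i hi j hj hij
      exact pow_injOn_Iio_orderOf (by simpa [hfw] using Finset.mem_range.mp hi)
        (by simpa [hfw] using Finset.mem_range.mp hj) hij
    have hcardSol : Sol.card ≤ d := IsCyclic.card_pow_eq_one_le hd
    have hFeq : F = Sol := Finset.eq_of_subset_of_card_le hFS (hcardSol.trans hcardF.ge)
    have hxSol : f x ∈ Sol := by
      simp only [hSol, Finset.mem_filter, Finset.mem_univ, true_and]; exact hfx
    rw [← hFeq] at hxSol
    obtain ⟨k, hk, hkx⟩ := Finset.mem_image.mp hxSol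
    refine ⟨k, Finset.mem_range.mp hk, ?_⟩
    -- now lift
    have h1 : f (x * (w ^ k)⁻¹) = 1 := by
      rw [map_mul, map_inv, map_pow, hkx, mul_inv_cancel]
    have h2 : (x * (w ^ k)⁻¹) ^ d = 1 := by
      rw [mul_pow, hx, one_mul, inv_pow, ← pow_mul, mul_comm, pow_mul, ← hw,
        pow_orderOf_eq_one, one_pow, inv_one]
    have := aux_ker_eq_one hp hα hdc _ h1 h2
    have := mul_inv_eq_one.mp this
    exact this.symm
  · rintro ⟨k, hk, rfl⟩
    show (w ^ k) ^ d = 1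
    rw [← pow_mul, mul_comm, pow_mul, ← hw, pow_orderOf_eq_one, one_pow]

set_option maxHeartbeats 1000000 in
theorem stmt16 (d : ℕ) (hd : 1 ≤ d) {n : ℕ} (m : Fin n → ℤ) (q : ℕ) (hq : IsAdmissible d q)
    (w : (ZMod q)ˣ) (hw : orderOf w = d) (a : Fin n → ZMod q) :
    expSum d q m a = fPoly d m (fun i j =>
      Circle.exp (2 * Real.pi *
        (((a i * (((w ^ (m i)) ^ (j : ℕ) : (ZMod q)ˣ) : ZMod q) : ZMod q).val : ℝ) / (q : ℝ)))) ∧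
    expSum d q m a ∈ Set.range (fPoly d m) := by
  classical
  obtain ⟨p, α, hp, hodd, hmod, hα, rfl⟩ := hq
  have hfact : Fact p.Prime := ⟨hp⟩
  have hqne : NeZero (p ^ α) := ⟨pow_ne_zero _ hp.pos.ne'⟩
  have hdp : d ∣ p - 1 := (Nat.modEq_iff_dvd' hp.one_lt.le).mp hmod.symm
  have hd0 : 0 < d := hd
  set z : ∀ i : Fin n, Fin (dSub d (m i)).totient → Circle := fun i j =>
    Circle.exp (2 * Real.pi *
      (((a i * (((w ^ (m i)) ^ (j : ℕ) : (ZMod (p ^ α))ˣ) : ZMod (p ^ α)) : ZMod (p ^ α)).val : ℝ)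
        / ((p ^ α : ℕ) : ℝ)))
    with hzdef
  suffices h : expSum d (p ^ α) m a = fPoly d m z by exact ⟨h, h ▸ Set.mem_range_self z⟩
  -- per-i facts
  have hui : ∀ i, orderOf (w ^ (m i)) = dSub d (m i) := fun i => aux_orderOf_zpow w (m i) hw
  have hei_pos : ∀ i, 0 < dSub d (m i) := fun i => (hui i) ▸ orderOf_pos _
  have hpowd : ∀ i, (w ^ (m i)) ^ d = 1 := by
    intro i
    rw [← zpow_natCast (w ^ (m i)) d, ← zpow_mul, mul_comm (m i) (d : ℤ), zpow_mul,
      zpow_natCast, ← hw, pow_orderOf_eq_one, one_zpow]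
  have hei_dvd : ∀ i, dSub d (m i) ∣ p - 1 := fun i =>
    dvd_trans ((hui i) ▸ orderOf_dvd_of_pow_eq_one (hpowd i)) hdp
  have hcyc : ∀ i, (cyclotomic (dSub d (m i)) (ZMod (p ^ α))).eval
      ((w ^ (m i) : (ZMod (p ^ α))ˣ) : ZMod (p ^ α)) = 0 := fun i =>
    aux_cyclotomic_eval_zero hp hα (hei_dvd i) (hei_pos i) _ (hui i)
  -- step 1 : exp sum as finite sum over powers of w
  have hexp : expSum d (p ^ α) m a = ∑ k ∈ Finset.range d,
      eZMod (p ^ α) (∑ i, a i * (((w ^ (m i)) ^ k : (ZMod (p ^ α))ˣ) : ZMod (p ^ α))) := by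
    rw [expSum, aux_set_eq hp hα hd0 hdp w hw, finsum_mem_coe_finset,
      Finset.sum_image (fun i hi j hj hij => pow_injOn_Iio_orderOf
        (show i ∈ Set.Iio (orderOf w) by rw [hw]; simpa using Finset.mem_range.mp hi)
        (show j ∈ Set.Iio (orderOf w) by rw [hw]; simpa using Finset.mem_range.mp hj) hij)]
    refine Finset.sum_congr rfl fun k _ => ?_
    congr 1
    refine Finset.sum_congr rfl fun i _ => ?_
    congr 2
    show (w ^ k) ^ (m i) = (w ^ (m i)) ^ k
    rw [← zpow_natCast w k, ← zpow_mul, mul_comm ((k : ℕ) : ℤ) (m i), zpow_mul, zpow_natCast]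
  rw [hexp, fPoly]
  refine Finset.sum_congr rfl fun k _ => ?_
  -- abbreviations for this k
  set V : ℕ := (∑ i, a i * (((w ^ (m i)) ^ k : (ZMod (p ^ α))ˣ) : ZMod (p ^ α))).val with hV
  set T : ℤ := ∑ i, ∑ j : Fin (dSub d (m i)).totient,
      cCoeff (dSub d (m i)) k (j : ℕ) *
        ((a i * (((w ^ (m i)) ^ ((j : ℕ)) : (ZMod (p ^ α))ˣ) : ZMod (p ^ α))).val : ℤ) with hTdef
  have hq0 : ((p ^ α : ℕ) : ℂ) ≠ 0 := Nat.cast_ne_zero.mpr hqne.out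
  -- RHS product equals exp(2πi T / q)
  have hzpow : ∀ (i : Fin n) (j : Fin (dSub d (m i)).totient),
      (z i j : ℂ) ^ cCoeff (dSub d (m i)) k (j : ℕ)
        = Complex.exp (2 * Real.pi * Complex.I *
            ((cCoeff (dSub d (m i)) k (j : ℕ) *
              ((a i * (((w ^ (m i)) ^ ((j : ℕ)) : (ZMod (p ^ α))ˣ) : ZMod (p ^ α))).val : ℤ) : ℤ) : ℂ)
            / ((p ^ α : ℕ) : ℂ)) := by
    intro i j
    simp only [hzdef]
    rw [Circle.coe_exp, ← Complex.exp_int_mul]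
    congr 1
    push_cast
    ring
  have hprod : (∏ i, ∏ j : Fin (dSub d (m i)).totient,
      (z i j : ℂ) ^ cCoeff (dSub d (m i)) k (j : ℕ))
      = Complex.exp (2 * Real.pi * Complex.I * (T : ℂ) / ((p ^ α : ℕ) : ℂ)) := by
    calc (∏ i, ∏ j : Fin (dSub d (m i)).totient,
        (z i j : ℂ) ^ cCoeff (dSub d (m i)) k (j : ℕ))
        = ∏ i, Complex.exp (∑ j : Fin (dSub d (m i)).totient,
            2 * Real.pi * Complex.I *
            ((cCoeff (dSub d (m i)) k (j : ℕ) *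
              ((a i * (((w ^ (m i)) ^ ((j : ℕ)) : (ZMod (p ^ α))ˣ) : ZMod (p ^ α))).val : ℤ) : ℤ) : ℂ)
            / ((p ^ α : ℕ) : ℂ)) := by
          refine Finset.prod_congr rfl fun i _ => ?_
          rw [Complex.exp_sum]
          exact Finset.prod_congr rfl fun j _ => hzpow i j
      _ = Complex.exp (∑ i, ∑ j : Fin (dSub d (m i)).totient,
            2 * Real.pi * Complex.I *
            ((cCoeff (dSub d (m i)) k (j : ℕ) *
              ((a i * (((w ^ (m i)) ^ ((j : ℕ)) : (ZMod (p ^ α))ˣ) : ZMod (p ^ α))).val : ℤ) : ℤ) : ℂ)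
            / ((p ^ α : ℕ) : ℂ)) := by
          rw [Complex.exp_sum]
      _ = Complex.exp (2 * Real.pi * Complex.I * (T : ℂ) / ((p ^ α : ℕ) : ℂ)) := by
          congr 1
          rw [hTdef]
          push_cast
          rw [Finset.mul_sum, Finset.sum_div]
          refine Finset.sum_congr rfl fun i _ => ?_
          rw [Finset.mul_sum, Finset.sum_div]
  rw [hprod]
  -- congruence T ≡ V mod q
  have hcong : ((T : ZMod (p ^ α))) = ((V : ℕ) : ZMod (p ^ α)) := by
    rw [hTdef, hV]
    push_cast [ZMod.natCast_val, ZMod.cast_id]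
    refine Finset.sum_congr rfl fun i _ => ?_
    calc ∑ j : Fin (dSub d (m i)).totient, (cCoeff (dSub d (m i)) k (j : ℕ) : ZMod (p ^ α)) *
          (a i * (((w ^ (m i)) ^ ((j : ℕ)) : (ZMod (p ^ α))ˣ) : ZMod (p ^ α)))
        = a i * ∑ j : Fin (dSub d (m i)).totient, (cCoeff (dSub d (m i)) k (j : ℕ) : ZMod (p ^ α)) *
            ((w ^ (m i) : (ZMod (p ^ α))ˣ) : ZMod (p ^ α)) ^ (j : ℕ) := by
          rw [Finset.mul_sum]
          refine Finset.sum_congr rfl fun j _ => ?_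
          rw [Units.val_pow_eq_pow_val]
          ring
      _ = a i * ((w ^ (m i) : (ZMod (p ^ α))ˣ) : ZMod (p ^ α)) ^ k := by
          rw [aux_sum_cCoeff (hei_pos i) _ (hcyc i) k]
      _ = a i * (((w ^ (m i)) ^ k : (ZMod (p ^ α))ˣ) : ZMod (p ^ α)) := by
          rw [Units.val_pow_eq_pow_val]
  have hdvd : ((p ^ α : ℕ) : ℤ) ∣ (V : ℤ) - T := by
    have h1 : ((T : ℤ) : ZMod (p ^ α)) = (((V : ℤ)) : ZMod (p ^ α)) := by
      push_cast
      exact hcong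
    exact Int.ModEq.dvd ((ZMod.intCast_eq_intCast_iff _ _ _).mp h1)
  obtain ⟨s, hs⟩ := hdvd
  have hTC : (T : ℂ) = (V : ℂ) - ((p ^ α : ℕ) : ℂ) * s := by
    have h2 : (T : ℤ) = (V : ℤ) - ((p ^ α : ℕ) : ℤ) * s := by omega
    exact_mod_cast congrArg (fun t : ℤ => (t : ℂ)) h2
  rw [eZMod, hTC]
  have harg : 2 * (Real.pi : ℂ) * Complex.I * ((V : ℂ) - ((p ^ α : ℕ) : ℂ) * s) / ((p ^ α : ℕ) : ℂ)
      = 2 * Real.pi * Complex.I * (V : ℂ) / ((p ^ α : ℕ) : ℂ)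
        + (-s : ℤ) * (2 * Real.pi * Complex.I) := by
    have hpC : (p : ℂ) ≠ 0 := Nat.cast_ne_zero.mpr hp.pos.ne'
    field_simp
    push_cast
    ring
  rw [harg, Complex.exp_add, Complex.exp_int_mul_two_pi_mul_I, mul_one]
end
end

section
/- Let d ≥ 1, let m = (m_1,…,m_n) ∈ ℤ^n be coprime with d, and let q be a d-admissible integer. Let w_q be an element of order d in (ℤ/qℤ)× and let a_1,…,a_n ∈ ℤ/qℤ. For 0 ≤ j < φ(d), set z_j := e((a_1 (w_q^{m_1})^j + ⋯ + a_n (w_q^{m_n})^j)/q) ∈ 𝕋 (well-defined since e(c/q) depends only on the class c modulo q). Then Σ_{x ∈ (ℤ/qℤ)×, x^d = 1} e((a_1 x^{m_1} + ⋯ + a_n x^{m_n})/q) = g_d(z_0, z_1, …, z_{φ(d)−1}). In particular, every such exponential sum lies in the image of g_d. -/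
open MeasureTheory Filter Polynomial Topology

noncomputable section

/-! ### Auxiliary lemmas -/

lemma auxCoprimeSubOne {p : ℕ} (hp : p.Prime) : Nat.Coprime (p - 1) p := by
  have h2 : p - (p - 1) = 1 := by have := hp.two_le; omega
  exact ((Nat.coprime_sub_self_left (by have := hp.two_le; omega)).mp (by simp [h2])).symm

lemma auxKerCard {p α : ℕ} (hp : p.Prime) (hα : 1 ≤ α) :
    Nat.card (ZMod.unitsMap (show p ∣ p ^ α from dvd_pow_self p (by omega))).ker
      = p ^ (α - 1) := by
  haveI : NeZero p := ⟨hp.ne_zero⟩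
  haveI : NeZero (p ^ α) := ⟨pow_ne_zero _ hp.ne_zero⟩
  set f := ZMod.unitsMap (show p ∣ p ^ α from dvd_pow_self p (by omega)) with hf
  have hsurj : Function.Surjective f := ZMod.unitsMap_surjective _
  have h1 : Nat.card f.ker * Nat.card (ZMod p)ˣ = Nat.card (ZMod (p ^ α))ˣ := by
    rw [← Subgroup.card_mul_index f.ker, Subgroup.index_ker,
      MonoidHom.range_eq_top.mpr hsurj, Subgroup.card_top]
  have h2 : Nat.card (ZMod p)ˣ = p - 1 := by
    rw [Nat.card_eq_fintype_card, ZMod.card_units_eq_totient, Nat.totient_prime hp]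
  have h3 : Nat.card (ZMod (p ^ α))ˣ = p ^ (α - 1) * (p - 1) := by
    rw [Nat.card_eq_fintype_card, ZMod.card_units_eq_totient,
      Nat.totient_prime_pow hp (by omega)]
  rw [h2, h3] at h1
  exact Nat.eq_of_mul_eq_mul_right (by have := hp.two_le; omega) h1

lemma auxKerEqOne {p α : ℕ} (hp : p.Prime) (hα : 1 ≤ α) {u : (ZMod (p ^ α))ˣ}
    (hker : ZMod.unitsMap (show p ∣ p ^ α from dvd_pow_self p (by omega)) u = 1)
    (hcop : Nat.Coprime (orderOf u) p) : u = 1 := by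
  have hmem : u ∈ (ZMod.unitsMap (show p ∣ p ^ α from dvd_pow_self p (by omega))).ker := hker
  have hdvd := Subgroup.orderOf_dvd_natCard _ hmem
  rw [auxKerCard hp hα] at hdvd
  exact orderOf_eq_one_iff.mp ((hcop.pow_right _).eq_one_of_dvd hdvd)

lemma auxIsUnit {p α : ℕ} (hp : p.Prime) (hα : 1 ≤ α) {x : ZMod (p ^ α)}
    (h : ZMod.castHom (show p ∣ p ^ α from dvd_pow_self p (by omega)) (ZMod p) x ≠ 0) :
    IsUnit x := by
  haveI : NeZero p := ⟨hp.ne_zero⟩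
  haveI : NeZero (p ^ α) := ⟨pow_ne_zero _ hp.ne_zero⟩
  rw [← ZMod.natCast_zmod_val x, ZMod.isUnit_iff_coprime,
    Nat.coprime_pow_right_iff (by omega), Nat.coprime_comm, hp.coprime_iff_not_dvd]
  intro hdvd
  apply h
  rw [ZMod.castHom_apply, ← ZMod.natCast_val]
  exact (ZMod.natCast_eq_zero_iff _ _).mpr hdvd

lemma auxPowSubOneUnit {p α d : ℕ} (hp : p.Prime) (hα : 1 ≤ α)
    (hdp : d ∣ p - 1) {ζ : (ZMod (p ^ α))ˣ} (hζ : orderOf ζ = d)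
    {e : ℕ} (he : e ∣ d) (hed : e ≠ d) :
    IsUnit ((ζ : ZMod (p ^ α)) ^ e - 1) := by
  haveI : NeZero p := ⟨hp.ne_zero⟩
  haveI : NeZero (p ^ α) := ⟨pow_ne_zero _ hp.ne_zero⟩
  apply auxIsUnit hp hα
  intro h0
  have hker : ZMod.unitsMap (show p ∣ p ^ α from dvd_pow_self p (by omega)) (ζ ^ e) = 1 := by
    simp only [map_sub, map_pow, map_one] at h0
    have h1 := sub_eq_zero.mp h0
    ext
    simpa [ZMod.unitsMap_def] using h1
  have hcop : Nat.Coprime (orderOf (ζ ^ e)) p := by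
    have h1 : orderOf (ζ ^ e) ∣ p - 1 := (orderOf_pow_dvd e).trans (hζ ▸ hdp)
    exact Nat.Coprime.coprime_dvd_left h1 (auxCoprimeSubOne hp)
  have hu : ζ ^ e = 1 := auxKerEqOne hp hα hker hcop
  have : d ∣ e := hζ ▸ orderOf_dvd_of_pow_eq_one hu
  exact hed (Nat.dvd_antisymm he this)

lemma auxIsUnitProd {M ι : Type*} [CommMonoid M] (s : Finset ι) (f : ι → M)
    (h : ∀ i ∈ s, IsUnit (f i)) : IsUnit (∏ i ∈ s, f i) := by
  classical
  induction s using Finset.induction_on with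
  | empty => simp
  | insert _ _ hns ih =>
    rw [Finset.prod_insert hns]
    exact (h _ (Finset.mem_insert_self _ _)).mul
      (ih fun i hi => h i (Finset.mem_insert_of_mem hi))

lemma auxCycloEval {p α d : ℕ} (hp : p.Prime) (hα : 1 ≤ α) (hd : 1 ≤ d)
    (hdp : d ∣ p - 1) {ζ : (ZMod (p ^ α))ˣ} (hζ : orderOf ζ = d) :
    (cyclotomic d (ZMod (p ^ α))).eval (ζ : ZMod (p ^ α)) = 0 := by
  have key : ∀ e : ℕ, 0 < e → e ∣ d →
      (∏ e' ∈ e.divisors, (cyclotomic e' (ZMod (p ^ α))).eval (ζ : ZMod (p ^ α)))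
        = (ζ : ZMod (p ^ α)) ^ e - 1 := by
    intro e he0 _
    rw [← Polynomial.eval_prod, prod_cyclotomic_eq_X_pow_sub_one he0]
    simp
  have hzero : (∏ e' ∈ d.divisors,
      (cyclotomic e' (ZMod (p ^ α))).eval (ζ : ZMod (p ^ α))) = 0 := by
    rw [key d (by omega) dvd_rfl]
    have h1 : (ζ ^ d : (ZMod (p ^ α))ˣ) = 1 := hζ ▸ pow_orderOf_eq_one ζ
    have : (ζ : ZMod (p ^ α)) ^ d = 1 := by simpa using congrArg Units.val h1
    rw [this, sub_self]
  rw [← Nat.insert_self_properDivisors (by omega : d ≠ 0),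
    Finset.prod_insert Nat.self_notMem_properDivisors] at hzero
  have hunit : IsUnit (∏ e' ∈ d.properDivisors,
      (cyclotomic e' (ZMod (p ^ α))).eval (ζ : ZMod (p ^ α))) := by
    apply auxIsUnitProd
    intro e hee
    obtain ⟨hed, hlt⟩ := Nat.mem_properDivisors.mp hee
    have he0 : 0 < e := Nat.pos_of_mem_properDivisors hee
    have hu : IsUnit ((ζ : ZMod (p ^ α)) ^ e - 1) :=
      auxPowSubOneUnit hp hα hdp hζ hed (by omega)
    rw [← key e he0 hed] at hu
    rw [← Finset.mul_prod_erase _ _ (Nat.mem_divisors_self e he0.ne')] at hu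
    exact isUnit_of_mul_isUnit_left hu
  exact (hunit.mul_left_eq_zero).mp hzero

lemma auxPowEqSum {q : ℕ} (d k : ℕ) (hd : 1 ≤ d) {ζ : ZMod q}
    (hcyc : (cyclotomic d (ZMod q)).eval ζ = 0) :
    ζ ^ k = ∑ j ∈ Finset.range d.totient, ((cCoeff d k j : ℤ) : ZMod q) * ζ ^ j := by
  have h := Polynomial.modByMonic_add_div ((X : ℤ[X]) ^ k) (cyclotomic d ℤ)
  have h2 := congrArg (Polynomial.aeval ζ) h
  rw [map_add, map_mul, map_pow, Polynomial.aeval_X] at h2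
  have hc : Polynomial.aeval ζ (cyclotomic d ℤ) = 0 := by
    rw [Polynomial.aeval_def, Polynomial.eval₂_eq_eval_map, Polynomial.map_cyclotomic, hcyc]
  rw [hc, zero_mul, add_zero] at h2
  have hdeg : ((X : ℤ[X]) ^ k %ₘ cyclotomic d ℤ).natDegree < d.totient := by
    by_cases h0 : ((X : ℤ[X]) ^ k %ₘ cyclotomic d ℤ) = 0
    · simp [h0, Nat.totient_pos.mpr (by omega : 0 < d)]
    · rw [Polynomial.natDegree_lt_iff_degree_lt h0]
      exact_mod_cast (Polynomial.degree_modByMonic_lt _ (cyclotomic.monic d ℤ)).trans_le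
        (le_of_eq (Polynomial.degree_cyclotomic d ℤ))
  rw [← h2, Polynomial.aeval_eq_sum_range' hdeg]
  apply Finset.sum_congr rfl
  intro j _
  rw [cCoeff, zsmul_eq_mul]

lemma eZMod_eq_stdAddChar {q : ℕ} [NeZero q] (x : ZMod q) :
    eZMod q x = ZMod.stdAddChar x := by
  rw [eZMod, ZMod.stdAddChar_apply, ZMod.toCircle_apply]

lemma auxAddCharSum {ι A M : Type*} [AddCommMonoid A] [CommMonoid M] (ψ : AddChar A M)
    (s : Finset ι) (f : ι → A) : ψ (∑ i ∈ s, f i) = ∏ i ∈ s, ψ (f i) := by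
  classical
  induction s using Finset.induction_on with
  | empty => simp
  | insert _ _ hns ih => rw [Finset.sum_insert hns, Finset.prod_insert hns,
      AddChar.map_add_eq_mul, ih]

lemma auxOrderZpow {G : Type*} [Group G] {w : G} {d : ℕ} (hd : 1 ≤ d) (hw : orderOf w = d)
    {m : ℤ} (hm : Int.gcd m d = 1) : orderOf (w ^ m) = d := by
  have hd0 : (d : ℤ) ≠ 0 := by exact_mod_cast (by omega : d ≠ 0)
  have htz : (((m % d).toNat : ℤ)) = m % d := Int.toNat_of_nonneg (Int.emod_nonneg m hd0)
  have h1 : w ^ m = w ^ ((m % d).toNat) := by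
    rw [← zpow_natCast, htz, ← hw, zpow_mod_orderOf]
  have hco : IsCoprime (m % (d : ℤ)) (d : ℤ) := by
    rw [Int.emod_def, sub_eq_add_neg, ← mul_neg]
    exact (Int.isCoprime_iff_gcd_eq_one.mpr hm).add_mul_left_left _
  have h2 : Nat.Coprime ((m % d).toNat) d := by
    have := Int.isCoprime_iff_gcd_eq_one.mp hco
    rwa [← htz, Int.gcd_natCast_natCast] at this
  rw [h1, Nat.Coprime.orderOf_pow, hw]
  rw [hw]
  exact h2.symm

theorem stmt17 (d : ℕ) (hd : 1 ≤ d) {n : ℕ} (m : Fin n → ℤ)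
    (hm : ∀ i : Fin n, Int.gcd (m i) (d : ℤ) = 1) (q : ℕ) (hq : IsAdmissible d q)
    (w : (ZMod q)ˣ) (hw : orderOf w = d) (a : Fin n → ZMod q) :
    expSum d q m a = gPoly d (fun j : Fin d.totient =>
      Circle.exp (2 * Real.pi *
        ((((∑ i : Fin n, a i * (((w ^ (m i)) ^ (j : ℕ) : (ZMod q)ˣ) : ZMod q)) :
          ZMod q).val : ℝ) / (q : ℝ)))) ∧
    expSum d q m a ∈ Set.range (gPoly d) := by
  obtain ⟨p, α, hp, hodd, hp1, hα, rfl⟩ := hq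
  haveI : Fact p.Prime := ⟨hp⟩
  haveI : NeZero p := ⟨hp.ne_zero⟩
  haveI : NeZero (p ^ α) := ⟨pow_ne_zero _ hp.ne_zero⟩
  classical
  have hdp : d ∣ p - 1 := (Nat.modEq_iff_dvd' hp.one_lt.le).mp hp1.symm
  have horder : ∀ i : Fin n, orderOf (w ^ (m i)) = d := fun i => auxOrderZpow hd hw (hm i)
  have hcyc : ∀ i : Fin n,
      (cyclotomic d (ZMod (p ^ α))).eval ((w ^ (m i) : (ZMod (p ^ α))ˣ) : ZMod (p ^ α)) = 0 :=
    fun i => auxCycloEval hp hα hd hdp (horder i)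
  set T : Finset (ZMod (p ^ α))ˣ := (Finset.range d).image (w ^ ·) with hT
  have hinj : ∀ x ∈ Finset.range d, ∀ y ∈ Finset.range d, w ^ x = w ^ y → x = y := by
    intro x hx y hy hxy
    exact pow_injOn_Iio_orderOf (by simpa [hw] using Finset.mem_range.mp hx)
      (by simpa [hw] using Finset.mem_range.mp hy) hxy
  have hTS : ∀ x ∈ T, x ^ d = 1 := by
    intro x hx
    obtain ⟨k, _, rfl⟩ := Finset.mem_image.mp hx
    show (w ^ k) ^ d = 1
    rw [← pow_mul, mul_comm, pow_mul, ← hw, pow_orderOf_eq_one, one_pow]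
  have hseteq : {x : (ZMod (p ^ α))ˣ | x ^ d = 1} = ↑T := by
    have hTsub : T ⊆ Finset.univ.filter (fun x : (ZMod (p ^ α))ˣ => x ^ d = 1) :=
      fun x hx => Finset.mem_filter.mpr ⟨Finset.mem_univ _, hTS x hx⟩
    have hcardT : T.card = d := by
      rw [hT, Finset.card_image_of_injOn fun x hx y hy hxy => hinj x hx y hy hxy,
        Finset.card_range]
    have hcard_le : (Finset.univ.filter (fun x : (ZMod (p ^ α))ˣ => x ^ d = 1)).card ≤ d := by
      set f := ZMod.unitsMap (show p ∣ p ^ α from dvd_pow_self p (by omega)) with hfdef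
      have hmt : ∀ x ∈ Finset.univ.filter (fun x : (ZMod (p ^ α))ˣ => x ^ d = 1),
          f x ∈ Finset.univ.filter (fun u : (ZMod p)ˣ => u ^ d = 1) := by
        intro x hx
        refine Finset.mem_filter.mpr ⟨Finset.mem_univ _, ?_⟩
        rw [← map_pow, (Finset.mem_filter.mp hx).2, map_one]
      have hinj2 : Set.InjOn f ↑(Finset.univ.filter (fun x : (ZMod (p ^ α))ˣ => x ^ d = 1)) := by
        intro x hx y hy hxy
        have hx1 : x ^ d = 1 := (Finset.mem_filter.mp (Finset.mem_coe.mp hx)).2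
        have hy1 : y ^ d = 1 := (Finset.mem_filter.mp (Finset.mem_coe.mp hy)).2
        have hk : f (x * y⁻¹) = 1 := by
          rw [map_mul, map_inv, hxy, mul_inv_cancel]
        have hpow : (x * y⁻¹) ^ d = 1 := by
          rw [mul_pow, hx1, inv_pow, hy1, inv_one, mul_one]
        have hord : orderOf (x * y⁻¹) ∣ d := orderOf_dvd_of_pow_eq_one hpow
        have hcop : Nat.Coprime (orderOf (x * y⁻¹)) p :=
          Nat.Coprime.coprime_dvd_left (hord.trans hdp) (auxCoprimeSubOne hp)
        exact mul_inv_eq_one.mp (auxKerEqOne hp hα hk hcop)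
      calc (Finset.univ.filter (fun x : (ZMod (p ^ α))ˣ => x ^ d = 1)).card
          ≤ (Finset.univ.filter (fun u : (ZMod p)ˣ => u ^ d = 1)).card :=
            Finset.card_le_card_of_injOn f hmt hinj2
        _ ≤ d := IsCyclic.card_pow_eq_one_le (by omega)
    have hTeq : T = Finset.univ.filter (fun x : (ZMod (p ^ α))ˣ => x ^ d = 1) :=
      Finset.eq_of_subset_of_card_le hTsub (hcard_le.trans_eq hcardT.symm)
    rw [hTeq]
    ext x
    simp
  have key : expSum d (p ^ α) m a = gPoly d (fun j : Fin d.totient =>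
      Circle.exp (2 * Real.pi *
        ((((∑ i : Fin n, a i * (((w ^ (m i)) ^ (j : ℕ) : (ZMod (p ^ α))ˣ) : ZMod (p ^ α))) :
          ZMod (p ^ α)).val : ℝ) / ((p ^ α : ℕ) : ℝ)))) := by
    rw [expSum, hseteq, finsum_mem_coe_finset, hT, Finset.sum_image hinj, gPoly]
    refine Finset.sum_congr rfl fun k hk => ?_
    -- notation
    set S : ℕ → ZMod (p ^ α) := fun j => ∑ i : Fin n, a i * ((w ^ (m i) : (ZMod (p ^ α))ˣ) : ZMod (p ^ α)) ^ j
      with hS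
    have hksw : ∀ i : Fin n, ((w ^ k) ^ (m i)) = (w ^ (m i)) ^ k := by
      intro i
      rw [← zpow_natCast w k, ← zpow_mul, mul_comm, zpow_mul, zpow_natCast]
    have harg : (∑ i : Fin n, a i * (((w ^ k) ^ (m i) : (ZMod (p ^ α))ˣ) : ZMod (p ^ α)))
        = ∑ j ∈ Finset.range d.totient, (cCoeff d k j) • S j := by
      calc (∑ i : Fin n, a i * (((w ^ k) ^ (m i) : (ZMod (p ^ α))ˣ) : ZMod (p ^ α)))
          = ∑ i : Fin n, a i * ((w ^ (m i) : (ZMod (p ^ α))ˣ) : ZMod (p ^ α)) ^ k := by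
            refine Finset.sum_congr rfl fun i _ => ?_
            rw [hksw i, Units.val_pow_eq_pow_val]
        _ = ∑ i : Fin n, a i * ∑ j ∈ Finset.range d.totient,
              ((cCoeff d k j : ℤ) : ZMod (p ^ α)) * ((w ^ (m i) : (ZMod (p ^ α))ˣ) : ZMod (p ^ α)) ^ j := by
            refine Finset.sum_congr rfl fun i _ => ?_
            rw [← auxPowEqSum d k hd (hcyc i)]
        _ = ∑ j ∈ Finset.range d.totient, (cCoeff d k j) • S j := by
            simp_rw [Finset.mul_sum]
            rw [Finset.sum_comm]
            refine Finset.sum_congr rfl fun j _ => ?_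
            rw [hS, zsmul_eq_mul, Finset.mul_sum]
            refine Finset.sum_congr rfl fun i _ => ?_
            ring
    rw [harg]
    have hchar : eZMod (p ^ α) (∑ j ∈ Finset.range d.totient, (cCoeff d k j) • S j)
        = ∏ j ∈ Finset.range d.totient, (eZMod (p ^ α) (S j)) ^ (cCoeff d k j) := by
      rw [eZMod_eq_stdAddChar, auxAddCharSum]
      exact Finset.prod_congr rfl fun j _ => by
        rw [AddChar.map_zsmul_eq_zpow, eZMod_eq_stdAddChar]
    rw [hchar, ← Fin.prod_univ_eq_prod_range (fun j => (eZMod (p ^ α) (S j)) ^ (cCoeff d k j))]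
    refine Finset.prod_congr rfl fun j _ => ?_
    congr 1
    have hSj : (∑ i : Fin n, a i * (((w ^ (m i)) ^ (j : ℕ) : (ZMod (p ^ α))ˣ) : ZMod (p ^ α))) = S j := by
      refine Finset.sum_congr rfl fun i _ => ?_
      rw [Units.val_pow_eq_pow_val]
    rw [hSj, eZMod, Circle.coe_exp]
    congr 1
    push_cast
    ring
  exact ⟨key, key ▸ Set.mem_range_self _⟩
end
end
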